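/- arXiv:math/0611643 — 8 statements merged into one kernel-verified Lean document; each statement's English description precedes it below -/
import Mathlib

section
/- Let A be a commutative noetherian local ring and C a semidualizing A-module. If for some n ≥ 0 the module C^n (direct sum of n copies of C) decomposes as a direct sum C^n ≅ U ⊕ V of A-modules, then there exist natural numbers p and q with p + q = n such that U ≅ C^p and V ≅ C^q. -/
open CategoryTheory Opposite

/-- A finitely generated module `C` over a commutative noetherian local ring `A` is
*semidualizing* if the natural ring homomorphism `A → End_A(C)` (sending `a` to
multiplication by `a`) is an isomorphism and `Ext_A^i(C,C) = 0` for every `i > 0`. -/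
def IsSemidualizing (A : Type) [CommRing A] (C : Type) [AddCommGroup C] [Module A C] : Prop :=
  Function.Bijective (algebraMap A (Module.End A C)) ∧
  ∀ i : ℕ, 0 < i →
    Subsingleton (((Ext A (ModuleCat A) i).obj (op (ModuleCat.of A C))).obj (ModuleCat.of A C))

/-- Hom into a product of copies of a module is the product of homs. -/
def homPiEquiv (R M N : Type*) [CommRing R] [AddCommGroup M] [Module R M]
    [AddCommGroup N] [Module R N] (ι : Type*) :
    (M →ₗ[R] (ι → N)) ≃ₗ[R] (ι → (M →ₗ[R] N)) where
  toFun f := fun i => (LinearMap.proj i).comp f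
  map_add' _ _ := rfl
  map_smul' _ _ := rfl
  invFun g := LinearMap.pi g
  left_inv f := by ext x i; rfl
  right_inv g := by ext i x; rfl

/-- If `C` is a semidualizing module over a commutative noetherian local ring `A` and
`C^n ≅ U ⊕ V`, then `U ≅ C^p` and `V ≅ C^q` for some `p + q = n`. -/
theorem semidualizing_power_decomposition
    (A : Type) [CommRing A] [IsNoetherianRing A] [IsLocalRing A]
    (C : Type) [AddCommGroup C] [Module A C] [Module.Finite A C]
    (hC : IsSemidualizing A C)
    (U V : Type) [AddCommGroup U] [Module A U] [Module.Finite A U]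
    [AddCommGroup V] [Module A V] [Module.Finite A V]
    (n : ℕ) (e : (Fin n → C) ≃ₗ[A] U × V) :
    ∃ p q : ℕ, p + q = n ∧
      Nonempty (U ≃ₗ[A] (Fin p → C)) ∧ Nonempty (V ≃ₗ[A] (Fin q → C)) := by
  classical
  obtain ⟨hbij, -⟩ := hC
  -- `A ≃ End_A(C)`, as a linear equivalence
  let σ : A ≃ₗ[A] Module.End A C :=
    LinearEquiv.ofBijective (Algebra.linearMap A (Module.End A C)) hbij
  -- the key equivalence `Hom(C,U) × Hom(C,V) ≃ Hom(C, C^n) ≃ A^n`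
  let Φ : ((C →ₗ[A] U) × (C →ₗ[A] V)) ≃ₗ[A] (Fin n → A) :=
    (LinearMap.prodEquiv A).trans <|
      ((LinearEquiv.refl A C).arrowCongr e.symm).trans <|
        (homPiEquiv A C C (Fin n)).trans (LinearEquiv.piCongrRight fun _ => σ.symm)
  -- `Hom(C,U)` and `Hom(C,V)` are finite free
  haveI : Module.Finite A ((C →ₗ[A] U) × (C →ₗ[A] V)) := Module.Finite.equiv (M := Fin n → A) Φ.symm
  haveI hFU : Module.Finite A (C →ₗ[A] U) :=
    Module.Finite.of_surjective (LinearMap.fst A (C →ₗ[A] U) (C →ₗ[A] V)) Prod.fst_surjective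
  haveI hFV : Module.Finite A (C →ₗ[A] V) :=
    Module.Finite.of_surjective (LinearMap.snd A (C →ₗ[A] U) (C →ₗ[A] V)) Prod.snd_surjective
  haveI : Module.Free A ((C →ₗ[A] U) × (C →ₗ[A] V)) := Module.Free.of_equiv Φ.symm
  haveI : Module.Projective A ((C →ₗ[A] U) × (C →ₗ[A] V)) := Module.Projective.of_free
  haveI hPU : Module.Projective A (C →ₗ[A] U) :=
    Module.Projective.of_split (LinearMap.inl A (C →ₗ[A] U) (C →ₗ[A] V)) (LinearMap.fst A (C →ₗ[A] U) (C →ₗ[A] V)) (by ext x; rfl)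
  haveI hPV : Module.Projective A (C →ₗ[A] V) :=
    Module.Projective.of_split (LinearMap.inr A (C →ₗ[A] U) (C →ₗ[A] V)) (LinearMap.snd A (C →ₗ[A] U) (C →ₗ[A] V)) (by ext x; rfl)
  haveI : Module.FinitePresentation A (C →ₗ[A] U) := Module.finitePresentation_of_finite A _
  haveI : Module.FinitePresentation A (C →ₗ[A] V) := Module.finitePresentation_of_finite A _
  haveI hfreeU : Module.Free A (C →ₗ[A] U) := Module.free_of_flat_of_isLocalRing
  haveI hfreeV : Module.Free A (C →ₗ[A] V) := Module.free_of_flat_of_isLocalRing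
  set p := Module.finrank A (C →ₗ[A] U) with hp
  set q := Module.finrank A (C →ₗ[A] V) with hq
  have hrank : p + q = n := by
    have h1 := Φ.finrank_eq
    rw [Module.finrank_prod, Module.finrank_fin_fun] at h1
    exact h1
  let bU : Module.Basis (Fin p) A (C →ₗ[A] U) := Module.finBasis A _
  let bV : Module.Basis (Fin q) A (C →ₗ[A] V) := Module.finBasis A _
  -- the evaluation maps
  let evU : (Fin p → C) →ₗ[A] U := LinearMap.lsum A (fun _ : Fin p => C) A fun i => bU i
  let evV : (Fin q → C) →ₗ[A] V := LinearMap.lsum A (fun _ : Fin q => C) A fun i => bV i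
  -- reindexing `C^n ≃ C^p × C^q`
  let split : (Fin n → C) ≃ₗ[A] ((Fin p → C) × (Fin q → C)) :=
    (LinearEquiv.piCongrLeft' A (fun _ => C)
      ((finCongr hrank.symm).trans finSumFinEquiv.symm)).trans
      (LinearEquiv.sumArrowLequivProdArrow _ _ A C)
  -- the comparison endomorphism of `C^n`
  let T : (Fin n → C) →ₗ[A] (Fin n → C) :=
    e.symm.toLinearMap ∘ₗ (evU.prodMap evV) ∘ₗ split.toLinearMap
  -- postcomposition by `T` on `Hom(C, C^n)` is surjective
  have hpost : ∀ f : C →ₗ[A] (Fin n → C), ∃ g : C →ₗ[A] (Fin n → C), T ∘ₗ g = f := by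
    intro f
    set g1 : C →ₗ[A] U := (LinearMap.fst A U V) ∘ₗ (e.toLinearMap ∘ₗ f) with hg1
    set h1 : C →ₗ[A] V := (LinearMap.snd A U V) ∘ₗ (e.toLinearMap ∘ₗ f) with hh1
    set a : Fin p → A := bU.equivFun g1 with ha
    set b : Fin q → A := bV.equivFun h1 with hb
    let u : C →ₗ[A] (Fin p → C) := LinearMap.pi fun i => a i • LinearMap.id
    let v : C →ₗ[A] (Fin q → C) := LinearMap.pi fun i => b i • LinearMap.id
    refine ⟨split.symm.toLinearMap ∘ₗ (u.prod v), ?_⟩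
    have hevU : ∀ c : C, evU (u c) = g1 c := by
      intro c
      have hsum : (∑ i, a i • bU i) = g1 := bU.sum_equivFun g1
      calc evU (u c) = ∑ i, (bU i) (a i • c) := by
            simp [evU, u, LinearMap.lsum_apply, LinearMap.pi_apply]
        _ = ∑ i, (a i • bU i) c := by
            simp [LinearMap.smul_apply, map_smul]
        _ = (∑ i, a i • bU i) c := by rw [LinearMap.sum_apply]
        _ = g1 c := by rw [hsum]
    have hevV : ∀ c : C, evV (v c) = h1 c := by
      intro c
      have hsum : (∑ i, b i • bV i) = h1 := bV.sum_equivFun h1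
      calc evV (v c) = ∑ i, (bV i) (b i • c) := by
            simp [evV, v, LinearMap.lsum_apply, LinearMap.pi_apply]
        _ = ∑ i, (b i • bV i) c := by
            simp [LinearMap.smul_apply, map_smul]
        _ = (∑ i, b i • bV i) c := by rw [LinearMap.sum_apply]
        _ = h1 c := by rw [hsum]
    apply LinearMap.ext; intro c
    have : T (split.symm (u c, v c)) = e.symm (evU (u c), evV (v c)) := by
      simp [T, LinearMap.comp_apply, LinearEquiv.apply_symm_apply, LinearMap.prodMap_apply]
    simp only [LinearMap.comp_apply, LinearEquiv.coe_coe, LinearMap.prod_apply, Function.prod]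
    rw [this, hevU, hevV]
    have : (g1 c, h1 c) = e (f c) := by
      apply Prod.ext <;> rfl
    rw [this, LinearEquiv.symm_apply_apply]
  -- hence `T` is surjective
  have hTsurj : Function.Surjective T := by
    choose g hg using fun j : Fin n => hpost (LinearMap.single A (fun _ => C) j)
    intro x
    refine ⟨∑ j, g j (x j), ?_⟩
    rw [map_sum]
    have : ∀ j, T (g j (x j)) = Pi.single j (x j) := by
      intro j
      have := congrArg (fun F => F (x j)) (hg j)
      simpa [LinearMap.comp_apply] using this
    simp only [this]
    exact Finset.univ_sum_single x
  -- and therefore bijective, since `C^n` is a noetherian module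
  haveI : IsNoetherian A (Fin n → C) := isNoetherian_of_isNoetherianRing_of_finite A _
  have hTinj : Function.Injective T :=
    IsNoetherian.injective_of_surjective_endomorphism T hTsurj
  -- so the evaluation pair is bijective
  have hpair : Function.Bijective (evU.prodMap evV) := by
    have hcomp : Function.Bijective (⇑e ∘ ⇑T ∘ ⇑split.symm) :=
      (e.bijective.comp ⟨hTinj, hTsurj⟩).comp split.symm.bijective
    have heq : ⇑(evU.prodMap evV) = ⇑e ∘ ⇑T ∘ ⇑split.symm := by
      funext x
      simp [T, LinearMap.comp_apply, LinearEquiv.apply_symm_apply]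
    rw [heq]; exact hcomp
  -- finally, each evaluation map is bijective
  have hUsurj : Function.Surjective evU := by
    intro y
    obtain ⟨x, hx⟩ := hpair.2 (y, 0)
    exact ⟨x.1, congrArg Prod.fst hx⟩
  have hUinj : Function.Injective evU := by
    intro c c' hcc
    have : (evU.prodMap evV) (c, 0) = (evU.prodMap evV) (c', 0) := by
      simp [LinearMap.prodMap_apply, hcc]
    have := hpair.1 this
    exact (Prod.mk.injEq _ _ _ _ ▸ this).1
  have hVsurj : Function.Surjective evV := by
    intro y
    obtain ⟨x, hx⟩ := hpair.2 (0, y)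
    exact ⟨x.2, congrArg Prod.snd hx⟩
  have hVinj : Function.Injective evV := by
    intro c c' hcc
    have : (evU.prodMap evV) (0, c) = (evU.prodMap evV) (0, c') := by
      simp [LinearMap.prodMap_apply, hcc]
    have := hpair.1 this
    exact (Prod.mk.injEq _ _ _ _ ▸ this).2
  exact ⟨p, q, hrank,
    ⟨(LinearEquiv.ofBijective evU ⟨hUinj, hUsurj⟩).symm⟩,
    ⟨(LinearEquiv.ofBijective evV ⟨hVinj, hVsurj⟩).symm⟩⟩
end

section
/- Let A be a commutative noetherian local ring and C a semidualizing A-module. Every surjective A-module homomorphism π : C^n → C^q splits; consequently q ≤ n and C^n ≅ ker(π) ⊕ C^q with ker(π) ≅ C^{n−q}. -/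
open CategoryTheory Opposite

namespace SemidualizingAux

variable {A : Type} [CommRing A]

/-- The identity matrix. -/
def δ (a : ℕ) : Fin a → Fin a → A := fun i j => if i = j then 1 else 0

/-- The linear map `M^a → M^b` induced by a scalar matrix. -/
noncomputable def ofMat (M : Type) [AddCommGroup M] [Module A M] {a b : ℕ}
    (c : Fin b → Fin a → A) : (Fin a → M) →ₗ[A] (Fin b → M) :=
  LinearMap.pi fun i => ∑ j, c i j • LinearMap.proj j

lemma ofMat_apply (M : Type) [AddCommGroup M] [Module A M] {a b : ℕ}
    (c : Fin b → Fin a → A) (x : Fin a → M) (i : Fin b) :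
    ofMat M c x i = ∑ j, c i j • x j := by simp [ofMat]

variable (M : Type) [AddCommGroup M] [Module A M]

lemma ofMat_mul {a b m : ℕ} (c : Fin b → Fin m → A) (d : Fin m → Fin a → A) :
    ofMat M (fun i j => ∑ k, c i k * d k j) = (ofMat M c) ∘ₗ (ofMat M d) := by
  apply LinearMap.ext; intro x; funext i
  simp only [LinearMap.comp_apply, ofMat_apply, Finset.sum_smul, mul_smul, Finset.smul_sum]
  exact Finset.sum_comm

lemma ofMat_id {a : ℕ} : ofMat M (δ a : Fin a → Fin a → A) = LinearMap.id := by
  apply LinearMap.ext; intro x; funext i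
  simp only [ofMat_apply, δ, LinearMap.id_apply]
  rw [Finset.sum_eq_single i]
  · simp
  · intro b _ hb; simp [Ne.symm hb]
  · simp

lemma ofMat_zero {a b : ℕ} : ofMat M (0 : Fin b → Fin a → A) = 0 := by
  apply LinearMap.ext; intro x; funext i; simp [ofMat_apply]

lemma ofMat_sub {a b : ℕ} (c d : Fin b → Fin a → A) :
    ofMat M (c - d) = ofMat M c - ofMat M d := by
  apply LinearMap.ext; intro x; funext i
  simp [ofMat_apply, sub_smul, Finset.sum_sub_distrib]

/-- Matrix of a linear map between free column modules. -/
noncomputable def matOf {a b : ℕ} (f : ((Fin a → A) →ₗ[A] (Fin b → A))) :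
    Fin b → Fin a → A := fun i j => f (Pi.single j 1) i

lemma matOf_ofMat {a b : ℕ} (c : Fin b → Fin a → A) :
    matOf (ofMat A c) = c := by
  funext i j
  simp only [matOf, ofMat_apply]
  rw [Finset.sum_eq_single j]
  · simp
  · intro k _ hk; simp [Pi.single_apply, hk]
  · simp

lemma eq_ofMat {a b : ℕ} (f : ((Fin a → A) →ₗ[A] (Fin b → A))) :
    f = ofMat A (matOf f) := by
  apply LinearMap.ext; intro v
  funext i
  rw [ofMat_apply]
  have hv : v = ∑ j, (v j) • (Pi.single j (1 : A) : Fin a → A) := by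
    funext t
    simp [Finset.sum_apply, Pi.single_apply]
  conv_lhs => rw [hv]
  rw [map_sum]
  simp only [map_smul, Finset.sum_apply, Pi.smul_apply]
  refine Finset.sum_congr rfl fun j _ => ?_
  rw [smul_eq_mul, smul_eq_mul, mul_comm]
  rfl

variable {C : Type} [AddCommGroup C] [Module A C]

/-- Every linear map `C^n → C^q` is induced by a scalar matrix when `End_A(C) = A`. -/
lemma exists_mat (hbij : Function.Bijective (algebraMap A (Module.End A C)))
    {n q : ℕ} (π : (Fin n → C) →ₗ[A] (Fin q → C)) :
    ∃ c : Fin q → Fin n → A, ofMat C c = π := by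
  let e : A ≃+* Module.End A C := RingEquiv.ofBijective (algebraMap A (Module.End A C)) hbij
  refine ⟨fun i j =>
    e.symm ((LinearMap.proj i) ∘ₗ π ∘ₗ (LinearMap.single A (fun _ : Fin n => C) j)), ?_⟩
  apply LinearMap.ext; intro x; funext i
  rw [ofMat_apply]
  have hx : x = ∑ j, (Pi.single j (x j) : Fin n → C) := by
    funext t; simp [Finset.sum_apply, Pi.single_apply]
  conv_rhs => rw [hx, map_sum]
  rw [Finset.sum_apply]
  refine Finset.sum_congr rfl fun j _ => ?_
  set T := (LinearMap.proj i) ∘ₗ π ∘ₗ (LinearMap.single A (fun _ : Fin n => C) j) with hT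
  calc e.symm T • x j = (algebraMap A (Module.End A C) (e.symm T)) (x j) := by
        rw [Module.algebraMap_end_apply]
    _ = T (x j) := by
        have : algebraMap A (Module.End A C) (e.symm T) = T := e.apply_symm_apply T
        rw [this]
    _ = π (Pi.single j (x j)) i := by simp [hT]

/-- Nakayama: a finite module over a local ring with `M = 𝔪M` is trivial. -/
lemma nak_subsingleton [IsLocalRing A] {M : Type} [AddCommGroup M] [Module A M]
    [Module.Finite A M]
    (h : (⊤ : Submodule A M) ≤ (IsLocalRing.maximalIdeal A) • ⊤) : Subsingleton M := by
  have hbot : (⊤ : Submodule A M) = ⊥ :=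
    Submodule.eq_bot_of_le_smul_of_le_jacobson_bot (IsLocalRing.maximalIdeal A) ⊤
      Module.Finite.fg_top h (IsLocalRing.maximalIdeal_le_jacobson ⊥)
  refine subsingleton_of_forall_eq 0 fun x => ?_
  have : x ∈ (⊥ : Submodule A M) := hbot ▸ Submodule.mem_top
  simpa using this

/-- If the matrix `c` is not surjective as a map `A^a → A^b`, there is a row vector `U`,
some entry of which is a unit, with `U · c ≡ 0 mod 𝔪`. -/
lemma exists_row [IsLocalRing A] {a b : ℕ} (c : Fin b → Fin a → A)
    (hne : LinearMap.range (ofMat A c) ≠ ⊤) :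
    ∃ U : Fin b → A, (∃ i0, IsUnit (U i0)) ∧
      ∀ j, (∑ i, U i * c i j) ∈ IsLocalRing.maximalIdeal A := by
  set m := IsLocalRing.maximalIdeal A with hm
  set R := LinearMap.range (ofMat A c) with hRdef
  set D := (Fin b → A) ⧸ R with hDdef
  haveI : Module.Finite A D := Module.Finite.of_surjective R.mkQ (Submodule.mkQ_surjective R)
  set Q := D ⧸ (m • ⊤ : Submodule A D) with hQdef
  have hQnt : Nontrivial Q := by
    by_contra hq
    rw [not_nontrivial_iff_subsingleton] at hq
    have h1 : (m • ⊤ : Submodule A D) = ⊤ := Submodule.Quotient.subsingleton_iff.mp hq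
    have h2 : Subsingleton D := nak_subsingleton (le_of_eq h1.symm)
    exact hne (Submodule.Quotient.subsingleton_iff.mp h2)
  have tors : Module.IsTorsionBySet A Q (m : Set A) := by
    rintro x ⟨a, ha⟩
    obtain ⟨y, rfl⟩ := Submodule.Quotient.mk_surjective _ x
    rw [← Submodule.Quotient.mk_smul, Submodule.Quotient.mk_eq_zero]
    exact Submodule.smul_mem_smul ha trivial
  letI kMod : Module (A ⧸ m) Q := tors.module
  letI : Field (A ⧸ m) := Ideal.Quotient.field m
  have hmk_smul : ∀ (aa : A) (x : Q), (Ideal.Quotient.mk m aa) • x = aa • x := fun _ _ => rfl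
  set u : (Fin b → A) →ₗ[A] Q := (Submodule.mkQ _) ∘ₗ (Submodule.mkQ R) with hu
  have husurj : Function.Surjective u := by
    rw [hu, LinearMap.coe_comp]
    exact (Submodule.mkQ_surjective _).comp (Submodule.mkQ_surjective _)
  obtain ⟨z, hz⟩ := exists_ne (0 : Q)
  obtain ⟨lam, hlam⟩ : ∃ φ : Module.Dual (A ⧸ m) Q, φ z ≠ 0 := by
    by_contra hφ; push_neg at hφ
    exact hz ((Module.forall_dual_apply_eq_zero_iff (A ⧸ m) z).mp hφ)
  have hexp : ∀ w : Fin b → A, u w = ∑ i, (Ideal.Quotient.mk m (w i)) • (u (Pi.single i 1)) := by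
    intro w
    have hw : w = ∑ i, (w i) • (Pi.single i (1 : A) : Fin b → A) := by
      funext t; simp [Finset.sum_apply, Pi.single_apply]
    conv_lhs => rw [hw, map_sum]
    refine Finset.sum_congr rfl fun i _ => ?_
    rw [map_smul, hmk_smul]
  obtain ⟨v, hv⟩ := husurj z
  have hi0 : ∃ i0, lam (u (Pi.single i0 1)) ≠ 0 := by
    by_contra hnone; push_neg at hnone
    apply hlam
    rw [← hv, hexp v, map_sum]
    simp [hnone]
  obtain ⟨i0, hi0⟩ := hi0
  choose U hU using fun i => Ideal.Quotient.mk_surjective (I := m) (lam (u (Pi.single i 1)))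
  refine ⟨U, ⟨i0, ?_⟩, ?_⟩
  · by_contra hu'
    have hmem : U i0 ∈ m := (IsLocalRing.mem_maximalIdeal _).mpr hu'
    have : Ideal.Quotient.mk m (U i0) = 0 := Ideal.Quotient.eq_zero_iff_mem.mpr hmem
    rw [hU] at this
    exact hi0 this
  · intro j
    rw [← Ideal.Quotient.eq_zero_iff_mem]
    have key : Ideal.Quotient.mk m (∑ i, U i * c i j) = lam (u (ofMat A c (Pi.single j 1))) := by
      have hcol : ofMat A c (Pi.single j 1)
          = ∑ i, (c i j) • (Pi.single i (1 : A) : Fin b → A) := by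
        funext t
        rw [ofMat_apply]
        simp only [Finset.sum_apply, Pi.smul_apply, Pi.single_apply, smul_eq_mul,
          mul_ite, mul_one, mul_zero]
        rw [Finset.sum_ite_eq' Finset.univ j fun j' => c t j',
          Finset.sum_ite_eq Finset.univ t fun i => c i j]
        simp
      rw [hcol, map_sum, map_sum, map_sum]
      refine Finset.sum_congr rfl fun i _ => ?_
      rw [map_smul, map_mul, ← hmk_smul (c i j), map_smul, hU, smul_eq_mul, mul_comm]
    rw [key]
    have hzero : u (ofMat A c (Pi.single j 1)) = 0 := by
      rw [hu, LinearMap.comp_apply]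
      have hmem : ofMat A c (Pi.single j 1) ∈ R := ⟨_, rfl⟩
      rw [show R.mkQ (ofMat A c (Pi.single j 1)) = 0 from
        (Submodule.Quotient.mk_eq_zero R).mpr hmem]
      simp
    rw [hzero, map_zero]

/-- A split surjection induces a decomposition `M ≃ ker p × N`. -/
noncomputable def splitEquiv {M N : Type} [AddCommGroup M] [AddCommGroup N]
    [Module A M] [Module A N]
    (p : M →ₗ[A] N) (s : N →ₗ[A] M) (h : p ∘ₗ s = LinearMap.id) :
    M ≃ₗ[A] (LinearMap.ker p × N) := by
  have h' : ∀ z, p (s z) = z := fun z => congrArg (fun f => f z) (congrArg DFunLike.coe h)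
  refine LinearEquiv.ofLinear
    (LinearMap.prod (LinearMap.codRestrict _ (LinearMap.id - s ∘ₗ p) fun x => ?_) p)
    ((LinearMap.ker p).subtype.coprod s) ?_ ?_
  · simp [LinearMap.mem_ker, h']
  · apply LinearMap.ext; rintro ⟨⟨y, hy⟩, z⟩
    rw [LinearMap.mem_ker] at hy
    apply Prod.ext
    · apply Subtype.ext
      simp [h', hy]
    · simp [h', hy]
  · apply LinearMap.ext; intro x
    simp

end SemidualizingAux

open SemidualizingAux in
/-- Every surjection `π : C^n → C^q` splits; consequently `q ≤ n` and
`C^n ≅ ker π ⊕ C^q` with `ker π ≅ C^{n-q}`. -/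
theorem semidualizing_surjection_splits
    (A : Type) [CommRing A] [IsNoetherianRing A] [IsLocalRing A]
    (C : Type) [AddCommGroup C] [Module A C] [Module.Finite A C]
    (hC : IsSemidualizing A C)
    (n q : ℕ) (π : (Fin n → C) →ₗ[A] (Fin q → C)) (hπ : Function.Surjective π) :
    (∃ σ : (Fin q → C) →ₗ[A] (Fin n → C), π ∘ₗ σ = LinearMap.id) ∧
    q ≤ n ∧
    Nonempty ((Fin n → C) ≃ₗ[A] (LinearMap.ker π × (Fin q → C))) ∧
    Nonempty ((LinearMap.ker π) ≃ₗ[A] (Fin (n - q) → C)) := by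
  obtain ⟨hbij, -⟩ := hC
  obtain ⟨cmat, hc⟩ := exists_mat hbij π
  have hCsurj : Function.Surjective (ofMat C cmat) := by rw [hc]; exact hπ
  -- Step 1: the matrix is surjective at the level of `A`.
  have hAsurj : Function.Surjective (ofMat A cmat) := by
    by_contra hA
    obtain ⟨U, ⟨i0, hunit⟩, hrow⟩ :=
      exists_row cmat (fun ht => hA (LinearMap.range_eq_top.mp ht))
    have hwsurj : Function.Surjective (ofMat C (fun (_ : Fin 1) i => U i)) := by
      intro y
      obtain ⟨uu, huu⟩ := hunit
      refine ⟨Pi.single i0 ((↑uu⁻¹ : A) • y 0), ?_⟩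
      funext t
      rw [ofMat_apply]
      rw [Finset.sum_eq_single i0]
      · rw [Pi.single_eq_same, ← huu, smul_smul, Units.mul_inv, one_smul]
        congr 1
        exact Subsingleton.elim 0 t
      · intro b _ hb; rw [Pi.single_eq_of_ne hb, smul_zero]
      · simp
    have hws : Function.Surjective ((ofMat C (fun (_ : Fin 1) i => U i)) ∘ₗ ofMat C cmat) := by
      rw [LinearMap.coe_comp]; exact hwsurj.comp hCsurj
    have hall : ∀ y : C, y ∈ (IsLocalRing.maximalIdeal A) • (⊤ : Submodule A C) := by
      intro y
      obtain ⟨x, hx⟩ := hws (fun _ => y)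
      have hy : y = ((ofMat C (fun (_ : Fin 1) i => U i)) ∘ₗ ofMat C cmat) x 0 := by rw [hx]
      rw [hy, ← ofMat_mul, ofMat_apply]
      exact Submodule.sum_mem _ fun j _ => Submodule.smul_mem_smul (hrow j) trivial
    haveI hCsub : Subsingleton C := nak_subsingleton (fun y _ => hall y)
    have hsA : Subsingleton A := ⟨fun a b => hbij.1 (Subsingleton.elim _ _)⟩
    exact absurd hsA (not_subsingleton A)
  -- Step 2: split the matrix over `A`.
  obtain ⟨Nl, hN⟩ := Module.projective_lifting_property (ofMat A cmat) LinearMap.id hAsurj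
  have hNl : Nl = ofMat A (matOf Nl) := eq_ofMat Nl
  have hprod : (fun i j => ∑ k, cmat i k * matOf Nl k j) = (δ q : Fin q → Fin q → A) := by
    have h1 : ofMat A (fun i j => ∑ k, cmat i k * matOf Nl k j)
        = ofMat A (δ q : Fin q → Fin q → A) := by
      rw [ofMat_mul, ← hNl, hN, ofMat_id]
    have h2 := congrArg matOf h1
    rwa [matOf_ofMat, matOf_ofMat] at h2
  have hσ : π ∘ₗ ofMat C (matOf Nl) = LinearMap.id := by
    rw [← hc, ← ofMat_mul, hprod, ofMat_id]
  -- Step 3: the kernel of the matrix over `A` is finite free.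
  have hproj : ∀ x : Fin n → A,
      (ofMat A cmat) ((LinearMap.id - Nl ∘ₗ (ofMat A cmat) :
        (Fin n → A) →ₗ[A] (Fin n → A)) x) = 0 := by
    intro x
    have h' : ∀ z, (ofMat A cmat) (Nl z) = z :=
      fun z => congrArg (fun f => f z) (congrArg DFunLike.coe hN)
    rw [LinearMap.sub_apply, map_sub, LinearMap.id_apply, LinearMap.comp_apply, h', sub_self]
  set K := LinearMap.ker (ofMat A cmat) with hK
  let pK : (Fin n → A) →ₗ[A] K :=
    LinearMap.codRestrict _ (LinearMap.id - Nl ∘ₗ (ofMat A cmat))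
      (fun x => LinearMap.mem_ker.mpr (hproj x))
  haveI : Module.Finite A K := Module.Finite.iff_fg.mpr (IsNoetherian.noetherian K)
  haveI : Module.Projective A K := by
    refine Module.Projective.of_split K.subtype pK ?_
    apply LinearMap.ext; rintro ⟨y, hy⟩
    have hy0 : (ofMat A cmat) y = 0 := LinearMap.mem_ker.mp hy
    apply Subtype.ext
    simp [pK, hy0]
  haveI : Module.FinitePresentation A K := Module.finitePresentation_of_finite A K
  haveI : Module.Free A K := Module.free_of_flat_of_isLocalRing
  have equivA : (Fin n → A) ≃ₗ[A] (K × (Fin q → A)) := splitEquiv (ofMat A cmat) Nl hN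
  have hfr : n = Module.finrank A K + q := by
    have h1 := equivA.finrank_eq
    rw [Module.finrank_prod] at h1
    simpa [Module.finrank_pi] using h1
  have hq : q ≤ n := by omega
  have hKrank : Module.finrank A K = n - q := by omega
  -- Step 4: a basis of the kernel.
  let bK : Module.Basis (Fin (n - q)) A K := Module.finBasisOfFinrankEq A K hKrank
  let g : (Fin (n - q) → A) →ₗ[A] (Fin n → A) := K.subtype ∘ₗ (bK.equivFun.symm : _ →ₗ[A] K)
  let r : (Fin n → A) →ₗ[A] (Fin (n - q) → A) := (bK.equivFun : K →ₗ[A] _) ∘ₗ pK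
  have hrg : r ∘ₗ g = LinearMap.id := by
    apply LinearMap.ext; intro x
    have hmem : ((bK.equivFun.symm x : K) : Fin n → A) ∈ K := (bK.equivFun.symm x).2
    have h0 : (ofMat A cmat) ((bK.equivFun.symm x : K) : Fin n → A) = 0 :=
      LinearMap.mem_ker.mp hmem
    show bK.equivFun (pK (K.subtype (bK.equivFun.symm x))) = x
    have : pK (K.subtype (bK.equivFun.symm x)) = bK.equivFun.symm x := by
      apply Subtype.ext
      simp [pK, h0]
    rw [this, LinearEquiv.apply_symm_apply]
  have hMg : (ofMat A cmat) ∘ₗ g = 0 := by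
    apply LinearMap.ext; intro x
    exact LinearMap.mem_ker.mp (bK.equivFun.symm x).2
  have hgr : g ∘ₗ r = LinearMap.id - Nl ∘ₗ (ofMat A cmat) := by
    apply LinearMap.ext; intro x
    show K.subtype (bK.equivFun.symm (bK.equivFun (pK x))) = _
    rw [LinearEquiv.symm_apply_apply]
    rfl
  -- Step 5: transfer to matrices.
  have hgmat : g = ofMat A (matOf g) := eq_ofMat g
  have hrmat : r = ofMat A (matOf r) := eq_ofMat r
  have hm1 : (fun i j => ∑ k, matOf r i k * matOf g k j) = (δ (n - q) : _) := by
    have h1 : ofMat A (fun i j => ∑ k, matOf r i k * matOf g k j)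
        = ofMat A (δ (n - q) : Fin (n - q) → Fin (n - q) → A) := by
      rw [ofMat_mul, ← hgmat, ← hrmat, hrg, ofMat_id]
    have h2 := congrArg matOf h1
    rwa [matOf_ofMat, matOf_ofMat] at h2
  have hm2 : (fun i j => ∑ k, cmat i k * matOf g k j) = (0 : Fin q → Fin (n - q) → A) := by
    have h1 : ofMat A (fun i j => ∑ k, cmat i k * matOf g k j)
        = ofMat A (0 : Fin q → Fin (n - q) → A) := by
      rw [ofMat_mul, ← hgmat, hMg, ofMat_zero]
    have h2 := congrArg matOf h1
    rwa [matOf_ofMat, matOf_ofMat] at h2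
  have hm3 : (fun i j => ∑ k, matOf g i k * matOf r k j)
      = (δ n : Fin n → Fin n → A) - (fun i j => ∑ k, matOf Nl i k * cmat k j) := by
    have h1 : ofMat A (fun i j => ∑ k, matOf g i k * matOf r k j)
        = ofMat A ((δ n : Fin n → Fin n → A) - fun i j => ∑ k, matOf Nl i k * cmat k j) := by
      rw [ofMat_mul, ← hgmat, ← hrmat, hgr, ofMat_sub, ofMat_id, ofMat_mul, ← hNl]
    have h2 := congrArg matOf h1
    rwa [matOf_ofMat, matOf_ofMat] at h2
  -- Step 6: back to `C`.
  have hRG : ofMat C (matOf r) ∘ₗ ofMat C (matOf g) = LinearMap.id := by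
    rw [← ofMat_mul, hm1, ofMat_id]
  have hπG : π ∘ₗ ofMat C (matOf g) = 0 := by
    rw [← hc, ← ofMat_mul, hm2, ofMat_zero]
  have hGR : ofMat C (matOf g) ∘ₗ ofMat C (matOf r)
      = LinearMap.id - (ofMat C (matOf Nl)) ∘ₗ π := by
    rw [← ofMat_mul, hm3, ofMat_sub, ofMat_id, ofMat_mul, hc]
  have hπG' : ∀ x, π (ofMat C (matOf g) x) = 0 :=
    fun x => congrArg (fun f => f x) (congrArg DFunLike.coe hπG)
  let Φ : (Fin (n - q) → C) →ₗ[A] LinearMap.ker π :=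
    LinearMap.codRestrict _ (ofMat C (matOf g)) (fun x => LinearMap.mem_ker.mpr (hπG' x))
  have hinj : Function.Injective Φ := by
    intro x y hxy
    have h1 : ofMat C (matOf g) x = ofMat C (matOf g) y := congrArg Subtype.val hxy
    have h2 := congrArg (ofMat C (matOf r)) h1
    have h3 : ∀ z, ofMat C (matOf r) (ofMat C (matOf g) z) = z :=
      fun z => congrArg (fun f => f z) (congrArg DFunLike.coe hRG)
    rwa [h3, h3] at h2
  have hsurj2 : Function.Surjective Φ := by
    rintro ⟨y, hy⟩
    refine ⟨ofMat C (matOf r) y, Subtype.ext ?_⟩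
    have h1 : ∀ z, ofMat C (matOf g) (ofMat C (matOf r) z)
        = z - (ofMat C (matOf Nl)) (π z) :=
      fun z => congrArg (fun f => f z) (congrArg DFunLike.coe hGR)
    have hy0 : π y = 0 := LinearMap.mem_ker.mp hy
    show ofMat C (matOf g) (ofMat C (matOf r) y) = y
    rw [h1, hy0, map_zero, sub_zero]
  exact ⟨⟨ofMat C (matOf Nl), hσ⟩, hq, ⟨splitEquiv π (ofMat C (matOf Nl)) hσ⟩,
    ⟨(LinearEquiv.ofBijective Φ ⟨hinj, hsurj2⟩).symm⟩⟩
end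

section
/- Let A be a commutative noetherian local ring and C a finitely generated A-module such that the natural ring homomorphism A → End_A(C) is an isomorphism. Then the set of associated primes of C equals the set of associated primes of A, the support of C is all of Spec A, and the Krull dimension of C equals the Krull dimension of A. -/
open IsLocalRing


theorem assHom_subset' {R M N : Type*} [CommRing R] [AddCommGroup M] [Module R M]
    [AddCommGroup N] [Module R N] [Module.Finite R M] :
    associatedPrimes R (M →ₗ[R] N) ⊆ associatedPrimes R N := by
  rintro p ⟨hp, f, rfl⟩
  obtain ⟨s, hs⟩ : (⊤ : Submodule R M).FG := Module.Finite.fg_top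
  have h1 : ∀ c : M, (R ∙ f).annihilator ≤ (R ∙ f c).annihilator := by
    intro c r hr
    rw [Submodule.mem_annihilator_span_singleton] at hr ⊢
    rw [← LinearMap.smul_apply, hr, LinearMap.zero_apply]
  have h2 : s.inf (fun c => (R ∙ f c).annihilator) ≤ (R ∙ f).annihilator := by
    intro r hr
    rw [Submodule.mem_annihilator_span_singleton]
    ext x
    have hx : (⊤ : Submodule R M) ≤ LinearMap.ker (r • f) := by
      rw [← hs, Submodule.span_le]
      intro c hc
      have hc' := (Submodule.mem_annihilator_span_singleton _ _).mp
        (Finset.inf_le hc (f := fun c => (R ∙ f c).annihilator) hr)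
      simpa [LinearMap.mem_ker] using hc'
    simpa using hx Submodule.mem_top
  rw [Submodule.bot_colon'] at hp ⊢
  obtain ⟨c, hcs, hc⟩ := hp.inf_le'.mp (h2.trans Ideal.le_radical)
  exact ⟨hp, f c, by
    rw [Submodule.bot_colon']
    exact le_antisymm (Ideal.radical_mono (h1 c)) (hp.radical_le_iff.mpr hc)⟩


theorem exists_nonzero_functional' (R : Type*) [CommRing R] [IsLocalRing R]
    (M : Type*) [AddCommGroup M] [Module R M] [Module.Finite R M] [Nontrivial M] :
    ∃ g : M →ₗ[R] R ⧸ maximalIdeal R, g ≠ 0 := by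
  have hann : (⊤ : Submodule R M).annihilator ≠ ⊤ := by
    intro h
    obtain ⟨c, c', hcc⟩ := exists_pair_ne M
    have h1 : (1 : R) ∈ (⊤ : Submodule R M).annihilator := h ▸ Submodule.mem_top
    have := Submodule.mem_annihilator.mp h1
    exact hcc (by rw [← one_smul R c, ← one_smul R c', this c Submodule.mem_top,
      this c' Submodule.mem_top])
  have hne : (maximalIdeal R • ⊤ : Submodule R M) ≠ ⊤ := by
    intro hMtop
    have h0 : (⊤ : Submodule R M) = ⊥ :=
      Submodule.eq_bot_of_eq_ideal_smul_of_le_jacobson_annihilator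
        (Module.Finite.fg_top (R := R) (M := M)) hMtop.symm
        (by rw [jacobson_eq_maximalIdeal _ hann])
    obtain ⟨c, c', hcc⟩ := exists_pair_ne M
    apply hcc
    have h1 := (Submodule.mem_bot R).mp (h0 ▸ Submodule.mem_top (x := c))
    have h2 := (Submodule.mem_bot R).mp (h0 ▸ Submodule.mem_top (x := c'))
    rw [h1, h2]
  obtain ⟨c₀, hc₀⟩ : ∃ c₀ : M, c₀ ∉ (maximalIdeal R • ⊤ : Submodule R M) := by
    by_contra h
    push_neg at h
    exact hne (eq_top_iff.mpr fun c _ => h c)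
  haveI : (maximalIdeal R).IsMaximal := maximalIdeal.isMaximal R
  letI : Field (R ⧸ maximalIdeal R) := Ideal.Quotient.field _
  have hv0 : (Submodule.Quotient.mk c₀ : M ⧸ (maximalIdeal R • ⊤ : Submodule R M)) ≠ 0 := by
    simpa [Submodule.Quotient.mk_eq_zero] using hc₀
  obtain ⟨lam, hlam⟩ : ∃ lam : Module.Dual (R ⧸ maximalIdeal R)
      (M ⧸ (maximalIdeal R • ⊤ : Submodule R M)), lam (Submodule.Quotient.mk c₀) ≠ 0 := by
    by_contra h
    push_neg at h
    exact hv0 ((Module.forall_dual_apply_eq_zero_iff (R ⧸ maximalIdeal R) _).mp h)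
  refine ⟨(LinearMap.restrictScalars R lam) ∘ₗ (maximalIdeal R • ⊤ : Submodule R M).mkQ, ?_⟩
  intro h
  apply hlam
  have := LinearMap.congr_fun h c₀
  simpa using this



theorem ass_le_of_end' (A : Type) [CommRing A] [IsNoetherianRing A]
    (C : Type) [AddCommGroup C] [Module A C] [Module.Finite A C]
    (e : A ≃ₗ[A] (C →ₗ[A] C)) :
    associatedPrimes A C ⊆ associatedPrimes A A := by
  classical
  rintro p hp0
  obtain ⟨hp, x, hx⟩ := isAssociatedPrime_iff.mp hp0
  rw [Submodule.bot_colon'] at hx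
  haveI := hp
  have hx1 : LocalizedModule.mkLinearMap p.primeCompl C x ≠ 0 := by
    intro h
    rw [show (0 : LocalizedModule p.primeCompl C) = LocalizedModule.mkLinearMap p.primeCompl C 0
        by simp,
      IsLocalizedModule.eq_iff_exists p.primeCompl (LocalizedModule.mkLinearMap p.primeCompl C)]
      at h
    obtain ⟨c, hcx⟩ := h
    rw [smul_zero] at hcx
    have hcp : (c : A) ∈ p := by
      have h2 := (Submodule.mem_annihilator_span_singleton (M := C) x (c : A)).mpr hcx
      rwa [← hx] at h2
    exact c.2 hcp
  haveI : Nontrivial (LocalizedModule p.primeCompl C) := ⟨_, 0, hx1⟩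
  haveI : Module.Finite (Localization p.primeCompl) (LocalizedModule p.primeCompl C) :=
    Module.Finite.of_isLocalizedModule p.primeCompl (LocalizedModule.mkLinearMap p.primeCompl C)
  -- maximal ideal kills x/1
  have hmx : ∀ a ∈ maximalIdeal (Localization p.primeCompl),
      a • LocalizedModule.mkLinearMap p.primeCompl C x = 0 := by
    have hle : Ideal.map (algebraMap A (Localization p.primeCompl)) p ≤
        LinearMap.ker (LinearMap.toSpanSingleton (Localization p.primeCompl)
          (LocalizedModule p.primeCompl C) (LocalizedModule.mkLinearMap p.primeCompl C x)) := by
      rw [Ideal.map_le_iff_le_comap]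
      intro a ha
      have hax : a • x = 0 := (Submodule.mem_annihilator_span_singleton _ _).mp (hx ▸ ha)
      simp only [Ideal.mem_comap, LinearMap.mem_ker, LinearMap.toSpanSingleton_apply]
      rw [algebraMap_smul, ← map_smul, hax, map_zero]
    intro a ha
    rw [← Localization.AtPrime.map_eq_maximalIdeal (I := p)] at ha
    have := hle ha
    simpa [LinearMap.mem_ker, LinearMap.toSpanSingleton_apply] using this
  -- nonzero functional
  obtain ⟨lam0, hlam0⟩ := exists_nonzero_functional' (Localization p.primeCompl)
    (LocalizedModule p.primeCompl C)
  obtain ⟨c₁, hc₁⟩ : ∃ c, lam0 c ≠ 0 := by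
    by_contra h
    push_neg at h
    exact hlam0 (LinearMap.ext fun c => h c)
  -- the map gbar : k → Cₚ sending 1 to x/1
  have hker : maximalIdeal (Localization p.primeCompl) ≤
      LinearMap.ker (LinearMap.toSpanSingleton (Localization p.primeCompl)
        (LocalizedModule p.primeCompl C) (LocalizedModule.mkLinearMap p.primeCompl C x)) := by
    intro a ha
    simpa [LinearMap.mem_ker, LinearMap.toSpanSingleton_apply] using hmx a ha
  set gbar := Submodule.liftQ (maximalIdeal (Localization p.primeCompl))
    (LinearMap.toSpanSingleton (Localization p.primeCompl)
      (LocalizedModule p.primeCompl C) (LocalizedModule.mkLinearMap p.primeCompl C x)) hker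
    with hgbar
  set g := gbar ∘ₗ lam0 with hg
  have hgne : g ≠ 0 := by
    intro h
    obtain ⟨α, hα⟩ := Submodule.Quotient.mk_surjective _ (lam0 c₁)
    have hαn : α ∉ maximalIdeal (Localization p.primeCompl) := by
      intro hmem
      exact hc₁ (by rw [← hα, Submodule.Quotient.mk_eq_zero _ |>.mpr hmem])
    have hαu : IsUnit α := by
      by_contra hu
      exact hαn ((mem_maximalIdeal _).mpr hu)
    have hgc : g c₁ = α • LocalizedModule.mkLinearMap p.primeCompl C x := by
      rw [hg, LinearMap.comp_apply, ← hα, hgbar, Submodule.liftQ_apply,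
        LinearMap.toSpanSingleton_apply]
    have : α • LocalizedModule.mkLinearMap p.primeCompl C x = 0 := by
      rw [← hgc, h, LinearMap.zero_apply]
    exact hx1 (by rwa [hαu.smul_eq_zero] at this)
  have hMle : maximalIdeal (Localization p.primeCompl) ≤
      (Submodule.span (Localization p.primeCompl) {g}).annihilator := by
    intro a ha
    rw [Submodule.mem_annihilator_span_singleton]
    ext c
    obtain ⟨b, hb⟩ := Submodule.Quotient.mk_surjective _ (lam0 c)
    have : a • lam0 c = 0 := by
      rw [← hb, ← Submodule.Quotient.mk_smul, Submodule.Quotient.mk_eq_zero]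
      have := Ideal.mul_mem_right b _ ha
      simpa [smul_eq_mul] using this
    rw [LinearMap.smul_apply, hg, LinearMap.comp_apply, ← map_smul, this, map_zero,
      LinearMap.zero_apply]
  have hann_eq : (Submodule.span (Localization p.primeCompl) {g}).annihilator =
      maximalIdeal (Localization p.primeCompl) := by
    refine le_antisymm (le_maximalIdeal ?_) hMle
    intro h
    apply hgne
    have : (1 : Localization p.primeCompl) • g = 0 :=
      (Submodule.mem_annihilator_span_singleton _ _).mp (h ▸ Submodule.mem_top)
    simpa using this
  -- localize the endomorphism ring
  letI := Module.finitePresentation_of_finite A C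
  haveI : IsLocalizedModule p.primeCompl
      ((LocalizedModule.map p.primeCompl (M := C) (N := C)) ∘ₗ e.toLinearMap) :=
    IsLocalizedModule.of_linearEquiv_right _ _ _
  haveI : IsLocalizedModule p.primeCompl (Algebra.linearMap A (Localization p.primeCompl)) :=
    (isLocalizedModule_iff_isLocalization' p.primeCompl _).mpr inferInstance
  set eps := IsLocalizedModule.linearEquiv p.primeCompl
    ((LocalizedModule.map p.primeCompl (M := C) (N := C)) ∘ₗ e.toLinearMap)
    (Algebra.linearMap A (Localization p.primeCompl)) with heps
  set a := eps g with ha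
  have key : ∀ r : A, r • a = 0 ↔ r ∈ p := by
    intro r
    rw [ha, ← map_smul, map_eq_zero_iff _ eps.injective]
    have h1 : r • g = algebraMap A (Localization p.primeCompl) r • g := by
      rw [algebraMap_smul]
    rw [h1, ← Submodule.mem_annihilator_span_singleton, hann_eq, ← Ideal.mem_comap,
]
    exact Iff.of_eq (congrArg (fun J => r ∈ J) (Localization.AtPrime.under_maximalIdeal (I := p)))
  -- pull down to A
  obtain ⟨⟨b, s⟩, hbs⟩ := IsLocalization.surj p.primeCompl a
  obtain ⟨t, ht⟩ : p.FG := IsNoetherian.noetherian p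
  have hyb : ∀ y : {y // y ∈ t}, ∃ u : p.primeCompl,
      (u : A) * ((y : A) * b) = 0 := by
    intro y
    have hyp : (y : A) ∈ p := by rw [← ht]; exact Ideal.subset_span y.2
    have h0 : algebraMap A (Localization p.primeCompl) ((y : A) * b) = 0 := by
      rw [map_mul, ← hbs, ← mul_assoc, ← Algebra.smul_def, (key _).mpr hyp, zero_mul]
    exact (IsLocalization.map_eq_zero_iff p.primeCompl _ _).mp h0
  choose v hv using hyb
  set u : A := ∏ y ∈ t.attach, (v y : A) with hu
  have huS : u ∈ p.primeCompl := Submonoid.prod_mem _ (fun y _ => (v y).2)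
  refine isAssociatedPrime_iff.mpr ⟨hp, u * b, ?_⟩
  rw [Submodule.bot_colon']
  refine le_antisymm ?_ ?_
  · -- p ≤ ann (u * b)
    rw [← ht]
    rw [Ideal.span_le]
    intro y hy
    rw [SetLike.mem_coe, Submodule.mem_annihilator_span_singleton, smul_eq_mul]
    obtain ⟨w, hw⟩ := Finset.dvd_prod_of_mem (fun z : {z // z ∈ t} => (v z : A))
      (Finset.mem_attach t ⟨y, hy⟩)
    rw [← hu] at hw
    have := hv ⟨y, hy⟩
    calc y * (u * b) = w * ((v ⟨y, hy⟩ : A) * (y * b)) := by rw [hw]; ring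
    _ = 0 := by rw [this, mul_zero]
  · -- ann (u * b) ≤ p
    intro r hr
    rw [Submodule.mem_annihilator_span_singleton, smul_eq_mul] at hr
    have h0 : algebraMap A (Localization p.primeCompl) (r * (u * b)) = 0 := by
      rw [hr, map_zero]
    rw [map_mul, map_mul, ← hbs, ← mul_assoc, ← mul_assoc] at h0
    have hs : IsUnit (algebraMap A (Localization p.primeCompl) (s : A)) :=
      IsLocalization.map_units _ s
    have hu' : IsUnit (algebraMap A (Localization p.primeCompl) u) :=
      IsLocalization.map_units _ (⟨u, huS⟩ : p.primeCompl)
    have h2 : algebraMap A (Localization p.primeCompl) u *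
        (algebraMap A (Localization p.primeCompl) (s : A) *
          (algebraMap A (Localization p.primeCompl) r * a)) = 0 := by
      rw [← h0]; ring
    rw [hu'.mul_right_eq_zero, hs.mul_right_eq_zero] at h2
    rw [← (key r), Algebra.smul_def, h2]


/-- Let `A` be a commutative noetherian local ring and `C` a finitely generated `A`-module
such that the natural map `A → End_A(C)` is an isomorphism.  Then `Ass C = Ass A`,
`Supp C = Spec A`, and the Krull dimension of `C` (that of `A ⧸ ann C`) equals that of `A`. -/
theorem semidualizing_ass_supp_dim
    (A : Type) [CommRing A] [IsNoetherianRing A] [IsLocalRing A]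
    (C : Type) [AddCommGroup C] [Module A C] [Module.Finite A C]
    (hC : Function.Bijective (algebraMap A (Module.End A C))) :
    associatedPrimes A C = associatedPrimes A A ∧
    Module.support A C = Set.univ ∧
    ringKrullDim (A ⧸ Module.annihilator A C) = ringKrullDim A := by
  have hfun : ⇑(LinearMap.toSpanSingleton A (Module.End A C) 1) =
      ⇑(algebraMap A (Module.End A C)) :=
    funext fun a => by
      rw [LinearMap.toSpanSingleton_apply, Algebra.algebraMap_eq_smul_one]
  have hbij : Function.Bijective ⇑(LinearMap.toSpanSingleton A (Module.End A C) 1) := by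
    rw [hfun]; exact hC
  let e : A ≃ₗ[A] (C →ₗ[A] C) :=
    LinearEquiv.ofBijective (LinearMap.toSpanSingleton A (Module.End A C) 1) hbij
  have hann : Module.annihilator A C = ⊥ := by
    ext a
    rw [Ideal.mem_bot, Module.mem_annihilator]
    constructor
    · intro h
      apply hC.injective
      rw [map_zero]
      exact LinearMap.ext fun c => by
        rw [Module.algebraMap_end_apply, h c, LinearMap.zero_apply]
    · rintro rfl
      intro c
      rw [zero_smul]
  have hAss : associatedPrimes A C = associatedPrimes A A := by
    apply le_antisymm
    · exact ass_le_of_end' A C e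
    · intro p hp
      have hp' : p ∈ associatedPrimes A (C →ₗ[A] C) :=
        (LinearEquiv.AssociatedPrimes.eq e) ▸ hp
      exact assHom_subset' hp'
  refine ⟨hAss, ?_, ?_⟩
  · rw [Module.support_eq_zeroLocus, hann]
    simpa using PrimeSpectrum.zeroLocus_bot (R := A)
  · rw [hann]
    exact ringKrullDim_eq_of_ringEquiv (RingEquiv.quotientBot A)
end

section
/- Let A be a commutative noetherian local ring and C a finitely generated A-module such that the natural ring homomorphism A → End_A(C) is an isomorphism. Then for every finitely generated A-module M one has Ass Hom_A(C,M) = Ass M, Supp Hom_A(C,M) = Supp M, and dim Hom_A(C,M) = dim M; moreover an element x ∈ A is a nonzerodivisor on M if and only if it is a nonzerodivisor on Hom_A(C,M). In particular (taking M = A or M = C) an element x ∈ A is a nonzerodivisor in A if and only if it is a nonzerodivisor on C. -/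
open Function

section Helpers

variable {A : Type} [CommRing A]

/-- If `x i` kills `f (gᵢ)` for generators `gᵢ` of `C`, then the product of the `x i`
kills `f`. -/
private lemma prod_smul_hom_eq_zero {C M : Type} [AddCommGroup C] [Module A C]
    [AddCommGroup M] [Module A M] {n : ℕ} (g : Fin n → C)
    (hg : Submodule.span A (Set.range g) = ⊤) (f : C →ₗ[A] M) (x : Fin n → A)
    (hx : ∀ i, x i • f (g i) = 0) : (∏ i, x i) • f = 0 := by
  have hW : Submodule.span A (Set.range g) ≤
      Submodule.comap f (LinearMap.ker (LinearMap.lsmul A M (∏ i, x i))) := by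
    rw [Submodule.span_le]
    rintro _ ⟨i, rfl⟩
    simp only [SetLike.mem_coe, Submodule.mem_comap, LinearMap.mem_ker, LinearMap.lsmul_apply]
    rw [← Finset.prod_erase_mul _ _ (Finset.mem_univ i), mul_smul, hx i, smul_zero]
  rw [hg] at hW
  ext c
  simpa using hW (Submodule.mem_top : c ∈ ⊤)

private lemma inj_smul_iff {M : Type} [AddCommGroup M] [Module A M] (x : A) :
    Function.Injective (fun m : M => x • m) ↔ ¬ ∃ m : M, m ≠ 0 ∧ x • m = 0 := by
  constructor
  · rintro h ⟨m, hm, h0⟩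
    exact hm (h (show x • m = x • 0 by simpa using h0))
  · intro h a b hab
    by_contra hne
    exact h ⟨a - b, sub_ne_zero.mpr hne, by
      simp only [smul_sub]; rw [show x • a = x • b from hab, sub_self]⟩

private lemma inj_smul_equiv_aux {N N' : Type} [AddCommGroup N] [Module A N] [AddCommGroup N']
    [Module A N'] (e : N ≃ₗ[A] N') (x : A)
    (h : Function.Injective (fun n : N => x • n)) :
    Function.Injective (fun n' : N' => x • n') := by
  intro a b hab
  have h1 : x • e.symm a = x • e.symm b := by
    rw [← map_smul, ← map_smul]
    exact congrArg e.symm hab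
  have h2 := h h1
  simpa using congrArg e h2

private lemma inj_smul_equiv {N N' : Type} [AddCommGroup N] [Module A N] [AddCommGroup N']
    [Module A N'] (e : N ≃ₗ[A] N') (x : A) :
    Function.Injective (fun n : N => x • n) ↔ Function.Injective (fun n' : N' => x • n') :=
  ⟨inj_smul_equiv_aux e x, inj_smul_equiv_aux e.symm x⟩

private lemma nzd_iff_of_ass_eq [IsNoetherianRing A] {N N' : Type} [AddCommGroup N] [Module A N]
    [AddCommGroup N'] [Module A N']
    (h : associatedPrimes A N = associatedPrimes A N') (x : A) :
    Function.Injective (fun n : N => x • n) ↔ Function.Injective (fun n' : N' => x • n') := by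
  rw [inj_smul_iff, inj_smul_iff, not_iff_not]
  have h1 := biUnion_associatedPrimes_eq_zero_divisors (R := A) (M := N)
  have h2 := biUnion_associatedPrimes_eq_zero_divisors (R := A) (M := N')
  rw [h] at h1
  have hx := Set.ext_iff.mp (h1.symm.trans h2) x
  simp only [Set.mem_setOf_eq] at hx
  constructor
  · rintro ⟨m, hm, hm0⟩
    exact (hx.mp ⟨m, hm, hm0⟩).imp fun y hy => ⟨hy.1, hy.2⟩
  · rintro ⟨m, hm, hm0⟩
    exact (hx.mpr ⟨m, hm, hm0⟩).imp fun y hy => ⟨hy.1, hy.2⟩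

private lemma mem_ann_span {M : Type} [AddCommGroup M] [Module A M] (m : M) (r : A) :
    r ∈ (Submodule.span A {m}).annihilator ↔ r • m = 0 :=
  Submodule.mem_annihilator_span_singleton m r

private lemma colon_eq_ann {M : Type} [AddCommGroup M] [Module A M] (m : M) :
    (⊥ : Submodule A M).colon {m} = (Submodule.span A {m}).annihilator := by
  ext r
  simp [Submodule.mem_colon_singleton, mem_ann_span]

/-- For a faithful finitely generated module `C` and a prime `p`, there is an element of `C`
whose image in `C/pC` has trivial annihilator over `A/p`.  (Determinant trick.) -/
private lemma exists_elem_smul_not_mem {C : Type} [AddCommGroup C] [Module A C]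
    [Module.Finite A C] (hfaith : ∀ a : A, (∀ c : C, a • c = 0) → a = 0)
    (p : Ideal A) (hp : p.IsPrime) :
    ∃ c₀ : C, ∀ s ∉ p, s • c₀ ∉ (p • ⊤ : Submodule A C) := by
  by_contra hcon
  push_neg at hcon
  obtain ⟨n, g, hg⟩ := Module.Finite.exists_fin (R := A) (M := C)
  choose s hs1 hs2 using fun i => hcon (g i)
  set t : A := ∏ i, s i with ht
  haveI := hp
  have htp : t ∉ p := by
    have : t ∈ p.primeCompl := Submonoid.prod_mem _ fun i _ => hs1 i
    exact this
  have hT : ∀ c : C, t • c ∈ (p • ⊤ : Submodule A C) := by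
    have hW : Submodule.span A (Set.range g) ≤
        Submodule.comap (LinearMap.lsmul A C t) (p • ⊤) := by
      rw [Submodule.span_le]
      rintro _ ⟨i, rfl⟩
      simp only [SetLike.mem_coe, Submodule.mem_comap, LinearMap.lsmul_apply]
      rw [ht, ← Finset.prod_erase_mul _ _ (Finset.mem_univ i), mul_smul]
      exact Submodule.smul_mem _ _ (hs2 i)
    rw [hg] at hW
    exact fun c => hW (Submodule.mem_top : c ∈ ⊤)
  have hrange : LinearMap.range (LinearMap.lsmul A C t) ≤ p • (⊤ : Submodule A C) := by
    rintro _ ⟨c, rfl⟩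
    exact hT c
  obtain ⟨q, hqm, -, hqc, hq0⟩ :=
    LinearMap.exists_monic_and_coeff_mem_pow_and_aeval_eq_zero_of_range_le_smul A
      (LinearMap.lsmul A C t) p hrange
  have hEnd : (LinearMap.lsmul A C t) = algebraMap A (Module.End A C) t := by
    ext c
    simp [Module.algebraMap_end_apply]
  have heval0 : Polynomial.eval t q = 0 := by
    rw [hEnd] at hq0
    have h1 : Polynomial.aeval (algebraMap A (Module.End A C) t) q
        = algebraMap A (Module.End A C) (Polynomial.aeval t q) :=
      Polynomial.aeval_algHom_apply (Algebra.ofId A (Module.End A C)) t q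
    rw [h1] at hq0
    have h2 := hfaith (Polynomial.aeval t q) (fun c => by
      have := congrArg (fun (e : Module.End A C) => e c) hq0
      simpa [Module.algebraMap_end_apply] using this)
    simpa [Polynomial.coe_aeval_eq_eval] using h2
  have hpow : t ^ q.natDegree ∈ p := by
    have hexp := Polynomial.eval_eq_sum_range (p := q) t
    rw [Finset.sum_range_succ, hqm.coeff_natDegree, one_mul, heval0] at hexp
    have hneg : t ^ q.natDegree = -∑ i ∈ Finset.range q.natDegree, q.coeff i * t ^ i := by
      exact eq_neg_of_add_eq_zero_right hexp.symm
    rw [hneg]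
    refine p.neg_mem (Ideal.sum_mem _ fun i hi => Ideal.mul_mem_right _ _ ?_)
    have hi' : q.natDegree - i ≠ 0 := Nat.sub_ne_zero_of_lt (Finset.mem_range.mp hi)
    exact Ideal.pow_le_self hi' (hqc i)
  exact htp (hp.mem_of_pow_mem _ hpow)

/-- A finitely generated module over a domain containing an element with trivial annihilator
admits a nonzero functional. -/
private lemma exists_functional {D : Type} [CommRing D] [IsDomain D]
    {T : Type} [AddCommGroup T] [Module D T] [Module.Finite D T]
    (t₀ : T) (ht : ∀ d : D, d ≠ 0 → d • t₀ ≠ 0) :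
    ∃ φ : T →ₗ[D] D, φ t₀ ≠ 0 := by
  set S := nonZeroDivisors D with hS
  let K := FractionRing D
  let V := LocalizedModule S T
  have hv : (LocalizedModule.mk t₀ 1 : V) ≠ 0 := by
    intro h
    rw [show (0 : V) = LocalizedModule.mk 0 1 from (LocalizedModule.zero_mk 1).symm,
      LocalizedModule.mk_eq] at h
    obtain ⟨u, hu⟩ := h
    simp only [one_smul, smul_zero] at hu
    exact ht u (nonZeroDivisors.ne_zero u.2) hu
  have hdual : ¬ ∀ ψ : Module.Dual K V, ψ (LocalizedModule.mk t₀ 1) = 0 := by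
    rw [Module.forall_dual_apply_eq_zero_iff]
    exact hv
  push_neg at hdual
  obtain ⟨ψ, hψ⟩ := hdual
  let ρ : T →ₗ[D] K := (ψ.restrictScalars D).comp (LocalizedModule.mkLinearMap S T)
  have hρ : ρ t₀ ≠ 0 := hψ
  obtain ⟨n, g, hg⟩ := Module.Finite.exists_fin (R := D) (M := T)
  choose b hb using fun i => IsLocalization.exists_integer_multiple S (ρ (g i))
  set btot : ↥S := ∏ i, b i with hbtot
  let ρ' : T →ₗ[D] K := (btot : D) • ρ
  have hint : ∀ u : T, ρ' u ∈ LinearMap.range (Algebra.linearMap D K) := by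
    have hW : Submodule.span D (Set.range g) ≤
        Submodule.comap ρ' (LinearMap.range (Algebra.linearMap D K)) := by
      rw [Submodule.span_le]
      rintro _ ⟨i, rfl⟩
      simp only [SetLike.mem_coe, Submodule.mem_comap]
      obtain ⟨d, hd⟩ := hb i
      have h3 : ρ' (g i) = (∏ j ∈ Finset.univ.erase i, (b j : D)) • ((b i : D) • ρ (g i)) := by
        show (btot : D) • ρ (g i) = _
        rw [← mul_smul, hbtot, ← Finset.prod_erase_mul _ _ (Finset.mem_univ i)]
        push_cast
        ring_nf
      rw [h3, ← hd]
      exact ⟨(∏ j ∈ Finset.univ.erase i, (b j : D)) * d, by simp [Algebra.smul_def]⟩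
    rw [hg] at hW
    exact fun u => hW (Submodule.mem_top : u ∈ ⊤)
  have hinj : Function.Injective (Algebra.linearMap D K) := IsFractionRing.injective D K
  let e : D ≃ₗ[D] LinearMap.range (Algebra.linearMap D K) :=
    LinearEquiv.ofInjective (Algebra.linearMap D K) hinj
  refine ⟨e.symm.toLinearMap.comp
    (LinearMap.codRestrict (LinearMap.range (Algebra.linearMap D K)) ρ' hint), ?_⟩
  intro h0
  have h1 : (⟨ρ' t₀, hint t₀⟩ : LinearMap.range (Algebra.linearMap D K)) = 0 := by
    have := congrArg e h0
    rw [map_zero] at this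
    rw [← this]
    exact (e.apply_symm_apply _).symm
  have h2 : ρ' t₀ = 0 := congrArg Subtype.val h1
  have h3 : ρ' t₀ = algebraMap D K (btot : D) * ρ t₀ := by
    show (btot : D) • ρ t₀ = _
    rw [Algebra.smul_def]
  rw [h3] at h2
  rcases mul_eq_zero.mp h2 with h | h
  · exact IsFractionRing.to_map_ne_zero_of_mem_nonZeroDivisors btot.2 h
  · exact hρ h

/-- For a faithful finitely generated module `C` over `A` and a prime `p` there is a nonzero
`A`-linear map `C → A/p` whose annihilator is exactly `p`. -/
private lemma exists_hom_to_quot {C : Type} [AddCommGroup C] [Module A C] [Module.Finite A C]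
    (hfaith : ∀ a : A, (∀ c : C, a • c = 0) → a = 0)
    (p : Ideal A) (hp : p.IsPrime) :
    ∃ φ : C →ₗ[A] A ⧸ p, φ ≠ 0 ∧ ∀ r : A, r • φ = 0 ↔ r ∈ p := by
  haveI := hp
  obtain ⟨c₀, hc₀⟩ := exists_elem_smul_not_mem hfaith p hp
  set pC : Submodule A C := p • ⊤ with hpC
  letI : Module (A ⧸ p) (C ⧸ pC) := inferInstance
  haveI hTower : IsScalarTower A (A ⧸ p) (C ⧸ pC) :=
    Module.IsTorsionBySet.isScalarTower _
  haveI : Module.Finite A (C ⧸ pC) :=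
    Module.Finite.of_surjective pC.mkQ (Submodule.mkQ_surjective pC)
  haveI : Module.Finite (A ⧸ p) (C ⧸ pC) := Module.Finite.of_restrictScalars_finite A _ _
  set t₀ : C ⧸ pC := Submodule.Quotient.mk c₀ with ht₀
  have ht : ∀ d : A ⧸ p, d ≠ 0 → d • t₀ ≠ 0 := by
    intro d hd
    obtain ⟨r, rfl⟩ := Ideal.Quotient.mk_surjective d
    have hr : r ∉ p := fun hr => hd (Ideal.Quotient.eq_zero_iff_mem.mpr hr)
    have h1 : (Ideal.Quotient.mk p r) • t₀ = Submodule.Quotient.mk (r • c₀) := rfl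
    rw [h1, Ne, Submodule.Quotient.mk_eq_zero]
    exact hc₀ r hr
  obtain ⟨φ₀, hφ₀⟩ := exists_functional t₀ ht
  refine ⟨(φ₀.restrictScalars A).comp pC.mkQ, ?_, ?_⟩
  · intro h
    apply hφ₀
    have := congrArg (fun ψ : C →ₗ[A] A ⧸ p => ψ c₀) h
    simpa using this
  · intro r
    constructor
    · intro h
      by_contra hr
      have h1 := congrArg (fun ψ : C →ₗ[A] A ⧸ p => ψ c₀) h
      simp only [LinearMap.smul_apply, LinearMap.coe_comp, LinearMap.coe_restrictScalars,
        Function.comp_apply, Submodule.mkQ_apply, LinearMap.zero_apply] at h1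
      have h2 : r • φ₀ t₀ = (Ideal.Quotient.mk p r) • φ₀ t₀ := by
        rw [← Ideal.Quotient.algebraMap_eq, algebraMap_smul]
      rw [h2] at h1
      have h3 : (Ideal.Quotient.mk p r) * φ₀ t₀ = 0 := h1
      rcases mul_eq_zero.mp h3 with h | h
      · exact hr (Ideal.Quotient.eq_zero_iff_mem.mp h)
      · exact hφ₀ h
    · intro hr
      ext c
      simp only [LinearMap.smul_apply, LinearMap.coe_comp, LinearMap.coe_restrictScalars,
        Function.comp_apply, Submodule.mkQ_apply, LinearMap.zero_apply]
      obtain ⟨y, hy⟩ := Ideal.Quotient.mk_surjective (φ₀ (Submodule.Quotient.mk c))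
      rw [← hy]
      have h4 : r • (Ideal.Quotient.mk p y) = Ideal.Quotient.mk p (r * y) := by
        have h5 := algebraMap_smul (A := A ⧸ p) (R := A) r ((Ideal.Quotient.mk p) y)
        rw [Ideal.Quotient.algebraMap_eq] at h5
        rw [← h5, smul_eq_mul, ← map_mul]
      rw [h4, Ideal.Quotient.eq_zero_iff_mem]
      exact Ideal.mul_mem_right _ _ hr

/-- Every prime containing the annihilator of an element contains an associated prime.
(Noetherian maximal-annihilator argument.) -/
private lemma exists_ass_le [IsNoetherianRing A] {M : Type} [AddCommGroup M] [Module A M]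
    (p : Ideal A) (hp : p.IsPrime) (m : M)
    (hm : (Submodule.span A {m}).annihilator ≤ p) :
    ∃ q ∈ associatedPrimes A M, q ≤ p := by
  set S : Set (Ideal A) :=
    {I : Ideal A | (∃ m' : M, I = (Submodule.span A {m'}).annihilator) ∧ I ≤ p} with hSdef
  have hne : S.Nonempty := ⟨_, ⟨m, rfl⟩, hm⟩
  obtain ⟨q, hqS, hqmax⟩ :=
    (set_has_maximal_iff_noetherian.mpr (inferInstance : IsNoetherian A A)) S hne
  obtain ⟨⟨m₀, rfl⟩, hqp⟩ := hqS
  have key : ∀ s ∉ p,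
      (Submodule.span A {s • m₀}).annihilator = (Submodule.span A {m₀}).annihilator := by
    intro s hs
    have h1 : (Submodule.span A {m₀}).annihilator
        ≤ (Submodule.span A {s • m₀}).annihilator := by
      intro r hr
      rw [mem_ann_span] at hr ⊢
      rw [smul_comm, hr, smul_zero]
    have h2 : (Submodule.span A {s • m₀}).annihilator ≤ p := by
      intro r hr
      rw [mem_ann_span] at hr
      have h3 : (r * s) • m₀ = 0 := by rw [mul_smul]; exact hr
      have h4 := hqp ((mem_ann_span m₀ (r * s)).mpr h3)
      rcases hp.mem_or_mem h4 with h | h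
      · exact h
      · exact absurd h hs
    exact (eq_of_le_of_not_lt h1 (hqmax _ ⟨⟨_, rfl⟩, h2⟩)).symm
  have hprime : (Submodule.span A {m₀}).annihilator.IsPrime := by
    constructor
    · intro h
      exact hp.ne_top (top_le_iff.mp (h ▸ hqp))
    · intro x y hxy
      by_cases hy : y ∈ (Submodule.span A {m₀}).annihilator
      · exact Or.inr hy
      left
      rw [mem_ann_span] at hxy hy ⊢
      rw [mul_smul] at hxy
      by_cases hyp : y ∈ p
      · set J := (Submodule.span A {y • m₀}).annihilator with hJ
        have hxJ : x ∈ J := (mem_ann_span _ _).mpr hxy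
        by_cases hJp : J ≤ p
        · have hqJ : (Submodule.span A {m₀}).annihilator ≤ J := by
            intro r hr
            rw [mem_ann_span] at hr ⊢
            rw [smul_comm, hr, smul_zero]
          have h6 : (Submodule.span A {m₀}).annihilator = J :=
            eq_of_le_of_not_lt hqJ (hqmax J ⟨⟨_, rfl⟩, hJp⟩)
          rw [← h6] at hxJ
          exact (mem_ann_span m₀ x).mp hxJ
        · obtain ⟨u, huJ, hup⟩ := SetLike.not_le_iff_exists.mp hJp
          rw [mem_ann_span] at huJ
          exfalso
          apply hy
          have h7 : y • (u • m₀) = 0 := by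
            rw [smul_comm]
            exact huJ
          have hmem := (mem_ann_span (u • m₀) y).mpr h7
          rw [key u hup] at hmem
          exact (mem_ann_span m₀ y).mp hmem
      · have hmem := (mem_ann_span (y • m₀) x).mpr hxy
        rw [key y hyp] at hmem
        exact (mem_ann_span m₀ x).mp hmem
  exact ⟨_, isAssociatedPrime_iff.mpr ⟨hprime, m₀, (colon_eq_ann m₀).symm⟩, hqp⟩

section trans
variable {C M : Type} [AddCommGroup C] [Module A C] [Module.Finite A C]
  [AddCommGroup M] [Module A M]

private lemma ass_hom_subset [IsNoetherianRing A] :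
    associatedPrimes A (C →ₗ[A] M) ⊆ associatedPrimes A M := by
  intro p hp'
  obtain ⟨hp, f, hpf⟩ := isAssociatedPrime_iff.mp (AssociatedPrimes.mem_iff.mp hp')
  rw [colon_eq_ann] at hpf
  obtain ⟨n, g, hg⟩ := Module.Finite.exists_fin (R := A) (M := C)
  have h1 : ∀ i, p ≤ (Submodule.span A {f (g i)}).annihilator := by
    intro i r hr
    rw [hpf, mem_ann_span] at hr
    rw [mem_ann_span]
    have := congrArg (fun ψ : C →ₗ[A] M => ψ (g i)) hr
    simpa using this
  have h2 : ∃ i, (Submodule.span A {f (g i)}).annihilator ≤ p := by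
    by_contra hcon
    push_neg at hcon
    choose x hx1 hx2 using fun i => SetLike.not_le_iff_exists.mp (hcon i)
    have hx1' : ∀ i, x i • f (g i) = 0 := fun i => (mem_ann_span _ _).mp (hx1 i)
    have hzero := prod_smul_hom_eq_zero g hg f x hx1'
    have hmem : (∏ i, x i) ∈ p := by
      rw [hpf, mem_ann_span]
      exact hzero
    haveI := hp
    have h4 : (∏ i, x i) ∈ p.primeCompl := Submonoid.prod_mem _ fun i _ => hx2 i
    exact h4 hmem
  obtain ⟨i, hi⟩ := h2
  exact isAssociatedPrime_iff.mpr ⟨hp, f (g i), (le_antisymm (h1 i) hi).trans (colon_eq_ann _).symm⟩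

private lemma ass_subset_hom [IsNoetherianRing A] (hfaith : ∀ a : A, (∀ c : C, a • c = 0) → a = 0) :
    associatedPrimes A M ⊆ associatedPrimes A (C →ₗ[A] M) := by
  intro p hp'
  obtain ⟨hp, m, hpm⟩ := isAssociatedPrime_iff.mp (AssociatedPrimes.mem_iff.mp hp')
  rw [colon_eq_ann] at hpm
  obtain ⟨φ, hφ0, hφann⟩ := exists_hom_to_quot hfaith p hp
  have hker : (p : Submodule A A) ≤ LinearMap.ker (LinearMap.toSpanSingleton A M m) := by
    intro r hr
    rw [LinearMap.mem_ker, LinearMap.toSpanSingleton_apply]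
    exact (mem_ann_span m r).mp (hpm ▸ hr)
  let ι : (A ⧸ p) →ₗ[A] M := Submodule.liftQ (p : Submodule A A)
    (LinearMap.toSpanSingleton A M m) hker
  have hι : Function.Injective ι := by
    rw [← LinearMap.ker_eq_bot]
    refine Submodule.ker_liftQ_eq_bot _ _ _ ?_
    intro r hr
    rw [LinearMap.mem_ker, LinearMap.toSpanSingleton_apply] at hr
    exact hpm ▸ (mem_ann_span m r).mpr hr
  let f : C →ₗ[A] M := ι.comp φ
  have hann : ∀ r : A, r • f = 0 ↔ r ∈ p := by
    intro r
    constructor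
    · intro h
      rw [← hφann r]
      ext c
      simp only [LinearMap.smul_apply, LinearMap.zero_apply]
      apply hι
      rw [map_zero, map_smul]
      have hc := congrArg (fun ψ : C →ₗ[A] M => ψ c) h
      simpa [f, ι] using hc
    · intro hr
      ext c
      have h1 := (hφann r).mpr hr
      have h2 := congrArg (fun ψ : C →ₗ[A] A ⧸ p => ψ c) h1
      simp only [LinearMap.smul_apply, LinearMap.zero_apply] at h2
      simp only [LinearMap.smul_apply, LinearMap.coe_comp, Function.comp_apply,
        LinearMap.zero_apply, f, ι, ← map_smul, h2, map_zero]
  refine isAssociatedPrime_iff.mpr ⟨hp, f, ?_⟩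
  rw [colon_eq_ann]
  ext r
  rw [mem_ann_span]
  exact (hann r).symm

private lemma supp_hom_subset : Module.support A (C →ₗ[A] M) ⊆ Module.support A M := by
  intro P hP
  by_contra hPM
  rw [Module.notMem_support_iff'] at hPM
  rw [Module.mem_support_iff'] at hP
  obtain ⟨f, hf⟩ := hP
  obtain ⟨n, g, hg⟩ := Module.Finite.exists_fin (R := A) (M := C)
  choose x hx1 hx2 using fun i => hPM (f (g i))
  have hzero := prod_smul_hom_eq_zero g hg f x hx2
  haveI := P.isPrime
  have hmem : (∏ i, x i) ∈ P.asIdeal.primeCompl := Submonoid.prod_mem _ fun i _ => hx1 i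
  exact hf _ hmem hzero

private lemma supp_subset_hom [IsNoetherianRing A]
    (hfaith : ∀ a : A, (∀ c : C, a • c = 0) → a = 0) :
    Module.support A M ⊆ Module.support A (C →ₗ[A] M) := by
  intro P hP
  rw [Module.mem_support_iff_exists_annihilator] at hP ⊢
  obtain ⟨m, hm⟩ := hP
  obtain ⟨q, hqAss, hqle⟩ := exists_ass_le P.asIdeal P.isPrime m hm
  obtain ⟨hq, f, hf⟩ := isAssociatedPrime_iff.mp (ass_subset_hom hfaith hqAss)
  rw [colon_eq_ann] at hf
  exact ⟨f, hf ▸ hqle⟩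

end trans

/-- The order isomorphism between primes of `A ⧸ I` and primes of `A` containing `I`. -/
private noncomputable def quotSpecIso (I : Ideal A) :
    PrimeSpectrum (A ⧸ I) ≃o {P : PrimeSpectrum A // I ≤ P.asIdeal} where
  toFun Q := ⟨⟨Ideal.comap (Ideal.Quotient.mk I) Q.asIdeal, Ideal.IsPrime.comap _⟩, by
    intro x hx
    show Ideal.Quotient.mk I x ∈ Q.asIdeal
    rw [Ideal.Quotient.eq_zero_iff_mem.mpr hx]
    exact Q.asIdeal.zero_mem⟩
  invFun P := ⟨Ideal.map (Ideal.Quotient.mk I) P.1.asIdeal,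
    Ideal.map_isPrime_of_surjective Ideal.Quotient.mk_surjective
      (by rw [Ideal.mk_ker]; exact P.2)⟩
  left_inv Q := PrimeSpectrum.ext
    (Ideal.map_comap_of_surjective _ Ideal.Quotient.mk_surjective _)
  right_inv P := Subtype.ext (PrimeSpectrum.ext (by
    show Ideal.comap (Ideal.Quotient.mk I) (Ideal.map (Ideal.Quotient.mk I) P.1.asIdeal)
        = P.1.asIdeal
    rw [Ideal.comap_map_of_surjective _ Ideal.Quotient.mk_surjective,
      ← RingHom.ker_eq_comap_bot, Ideal.mk_ker, sup_eq_left.mpr P.2]))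
  map_rel_iff' {Q1 Q2} := by
    constructor
    · intro hc
      have hc' : Ideal.comap (Ideal.Quotient.mk I) Q1.asIdeal
          ≤ Ideal.comap (Ideal.Quotient.mk I) Q2.asIdeal := hc
      have h2 := Ideal.map_mono (f := Ideal.Quotient.mk I) hc'
      rwa [Ideal.map_comap_of_surjective _ Ideal.Quotient.mk_surjective,
        Ideal.map_comap_of_surjective _ Ideal.Quotient.mk_surjective] at h2
    · intro h
      exact Ideal.comap_mono h

private lemma dim_eq_of_support_eq (I J : Ideal A)
    (h : ∀ P : PrimeSpectrum A, I ≤ P.asIdeal ↔ J ≤ P.asIdeal) :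
    ringKrullDim (A ⧸ I) = ringKrullDim (A ⧸ J) := by
  have e1 := Order.krullDim_eq_of_orderIso (quotSpecIso I)
  have e2 := Order.krullDim_eq_of_orderIso (quotSpecIso J)
  have e3 : Order.krullDim {P : PrimeSpectrum A // I ≤ P.asIdeal}
      = Order.krullDim {P : PrimeSpectrum A // J ≤ P.asIdeal} := by
    refine Order.krullDim_eq_of_orderIso ?_
    exact { toEquiv := Equiv.subtypeEquivRight fun P => h P
            map_rel_iff' := Iff.rfl }
  show Order.krullDim (PrimeSpectrum (A ⧸ I)) = Order.krullDim (PrimeSpectrum (A ⧸ J))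
  rw [e1, e2, e3]

end Helpers

/-- Let `A` be a commutative noetherian local ring and `C` a finitely generated `A`-module
such that the natural map `A → End_A(C)` is an isomorphism.  Then for every finitely
generated `A`-module `M`, the module `Hom_A(C,M)` has the same associated primes, support,
Krull dimension and nonzerodivisors as `M`; in particular, `x ∈ A` is a nonzerodivisor
in `A` if and only if it is a nonzerodivisor on `C`. -/
theorem hom_semidualizing_ass_supp_dim_nzd
    (A : Type) [CommRing A] [IsNoetherianRing A] [IsLocalRing A]
    (C : Type) [AddCommGroup C] [Module A C] [Module.Finite A C]
    (hC : Function.Bijective (algebraMap A (Module.End A C))) :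
    (∀ (M : Type) [AddCommGroup M] [Module A M] [Module.Finite A M],
      associatedPrimes A (C →ₗ[A] M) = associatedPrimes A M ∧
      Module.support A (C →ₗ[A] M) = Module.support A M ∧
      ringKrullDim (A ⧸ Module.annihilator A (C →ₗ[A] M)) =
        ringKrullDim (A ⧸ Module.annihilator A M) ∧
      ∀ x : A, (Function.Injective (fun m : M => x • m) ↔
        Function.Injective (fun f : C →ₗ[A] M => x • f))) ∧
    ∀ x : A, (Function.Injective (fun a : A => x • a) ↔
      Function.Injective (fun c : C => x • c)) := by
  have hfaith : ∀ a : A, (∀ c : C, a • c = 0) → a = 0 := by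
    intro a ha
    have h1 : algebraMap A (Module.End A C) a = algebraMap A (Module.End A C) 0 := by
      rw [map_zero]
      ext c
      simpa [Module.algebraMap_end_apply] using ha c
    exact hC.1 h1
  have main : ∀ (M : Type) [AddCommGroup M] [Module A M] [Module.Finite A M],
      associatedPrimes A (C →ₗ[A] M) = associatedPrimes A M ∧
      Module.support A (C →ₗ[A] M) = Module.support A M ∧
      ringKrullDim (A ⧸ Module.annihilator A (C →ₗ[A] M)) =
        ringKrullDim (A ⧸ Module.annihilator A M) ∧
      ∀ x : A, (Function.Injective (fun m : M => x • m) ↔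
        Function.Injective (fun f : C →ₗ[A] M => x • f)) := by
    intro M _ _ _
    haveI : IsNoetherian A M := isNoetherian_of_isNoetherianRing_of_finite A M
    haveI : Module.Finite A (C →ₗ[A] M) := ⟨IsNoetherian.noetherian ⊤⟩
    have hAss : associatedPrimes A (C →ₗ[A] M) = associatedPrimes A M :=
      Set.Subset.antisymm ass_hom_subset (ass_subset_hom hfaith)
    have hSupp : Module.support A (C →ₗ[A] M) = Module.support A M :=
      Set.Subset.antisymm supp_hom_subset (supp_subset_hom hfaith)
    refine ⟨hAss, hSupp, ?_, fun x => nzd_iff_of_ass_eq hAss.symm x⟩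
    apply dim_eq_of_support_eq
    intro P
    have h1 := Set.ext_iff.mp
      ((Module.support_eq_zeroLocus (R := A) (M := C →ₗ[A] M)).symm.trans
        (hSupp.trans (Module.support_eq_zeroLocus (R := A) (M := M)))) P
    rw [PrimeSpectrum.mem_zeroLocus, PrimeSpectrum.mem_zeroLocus,
      SetLike.coe_subset_coe, SetLike.coe_subset_coe] at h1
    exact h1
  refine ⟨main, ?_⟩
  let θ : A →ₗ[A] (C →ₗ[A] C) :=
    { toFun := algebraMap A (Module.End A C)
      map_add' := fun a b => map_add _ a b
      map_smul' := fun a b => by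
        ext c
        simp [Module.algebraMap_end_apply, mul_smul, smul_comm a b] }
  let e : A ≃ₗ[A] (C →ₗ[A] C) := LinearEquiv.ofBijective θ hC
  intro x
  exact (inj_smul_equiv e x).trans ((main C).2.2.2 x).symm
end

section
/- Let A be a commutative noetherian local ring, C a semidualizing A-module, and Y a finitely generated A-module of finite C-dimension. Then Ext_A^i(C,Y) = 0 for every i > 0. -/
open CategoryTheory Opposite

/-- `Y` admits a resolution `0 → C_s → ⋯ → C_0 → Y → 0` of length at most `s` in which
each `C_i` is a finite direct sum of copies of `C`. -/
def HasResolutionByOfLength (A : Type) [CommRing A] (C : Type) [AddCommGroup C] [Module A C]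
    (Y : Type) [AddCommGroup Y] [Module A Y] (s : ℕ) : Prop :=
  ∃ (n : ℕ → ℕ) (d : ∀ i : ℕ, ((Fin (n (i + 1)) → C) →ₗ[A] (Fin (n i) → C)))
    (ε : (Fin (n 0) → C) →ₗ[A] Y),
    (∀ i, s < i → n i = 0) ∧
    Function.Surjective ε ∧ Function.Exact (d 0) ε ∧
    ∀ i : ℕ, Function.Exact (d (i + 1)) (d i)

/-- `Y` has finite `C`-dimension. -/
def HasFiniteCDim (A : Type) [CommRing A] (C : Type) [AddCommGroup C] [Module A C]
    (Y : Type) [AddCommGroup Y] [Module A Y] : Prop :=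
  ∃ s : ℕ, HasResolutionByOfLength A C Y s

/-- The `C`-dimension of `Y`: the smallest `s` such that `Y` has a resolution of length `s`
by finite direct sums of copies of `C`. -/
noncomputable def cDim (A : Type) [CommRing A] (C : Type) [AddCommGroup C] [Module A C]
    (Y : Type) [AddCommGroup Y] [Module A Y] : ℕ :=
  sInf {s | HasResolutionByOfLength A C Y s}

section Helpers
open Limits
noncomputable section
variable {A : Type} [CommRing A]

variable {A : Type} [CommRing A]

def postcompComplex (K : ChainComplex (ModuleCat A) ℕ) {Y Z : ModuleCat A} (φ : Y ⟶ Z) :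
    K.linearYonedaObj A Y ⟶ K.linearYonedaObj A Z where
  f i := ModuleCat.ofHom (Linear.rightComp A (K.X i) φ)
  comm' i j hij := by
    ext x
    exact (Category.assoc (K.d j i) (x : K.X i ⟶ Y) φ).symm

@[simp] lemma postcompComplex_f_apply (K : ChainComplex (ModuleCat A) ℕ) {Y Z : ModuleCat A}
    (φ : Y ⟶ Z) (i : ℕ) (x : K.X i ⟶ Y) : (postcompComplex K φ).f i x = x ≫ φ := rfl

def mapSC (K : ChainComplex (ModuleCat A) ℕ) (S : ShortComplex (ModuleCat A)) :
    ShortComplex (CochainComplex (ModuleCat A) ℕ) :=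
  ShortComplex.mk (postcompComplex K S.f) (postcompComplex K S.g) (by
    ext i x
    simp only [HomologicalComplex.comp_f, ModuleCat.hom_comp, LinearMap.comp_apply]
    show (x ≫ S.f) ≫ S.g = _
    erw [Category.assoc, S.zero]
    rfl)

lemma mapSC_shortExact {X : ModuleCat A} (P : ProjectiveResolution X)
    (S : ShortComplex (ModuleCat A)) (hS : S.ShortExact) :
    (mapSC P.complex S).ShortExact := by
  apply HomologicalComplex.shortExact_of_degreewise_shortExact
  intro i
  have := hS.epi_g
  refine ShortComplex.ShortExact.mk' ?_ ?_ ?_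
  · rw [ShortComplex.moduleCat_exact_iff]
    intro (x : P.complex.X i ⟶ S.X₂) (hx : x ≫ S.g = 0)
    obtain ⟨l, hl⟩ := KernelFork.IsLimit.lift' hS.fIsKernel x hx
    exact ⟨l, hl⟩
  · rw [ModuleCat.mono_iff_injective]
    intro (a : P.complex.X i ⟶ S.X₁) (b : P.complex.X i ⟶ S.X₁) (hab : a ≫ S.f = b ≫ S.f)
    have := hS.mono_f
    exact (cancel_mono S.f).1 hab
  · rw [ModuleCat.epi_iff_surjective]
    intro (y : P.complex.X i ⟶ S.X₃)
    have := P.projective i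
    exact ⟨Projective.factorThru y S.g, Projective.factorThru_comp y S.g⟩

lemma subsingleton_of_moduleCat_iso {M N : ModuleCat A} (e : M ≅ N) (h : Subsingleton M) :
    Subsingleton N := by
  haveI := h
  exact Equiv.subsingleton ((forget (ModuleCat A)).mapIso e).symm.toEquiv

lemma subsingleton_X₂_of_exact {T : ShortComplex (ModuleCat A)} (hT : T.Exact)
    (h1 : Subsingleton T.X₁) (h3 : Subsingleton T.X₃) : Subsingleton T.X₂ := by
  rw [ShortComplex.moduleCat_exact_iff] at hT
  refine subsingleton_of_forall_eq 0 fun x => ?_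
  obtain ⟨y, hy⟩ := hT x (Subsingleton.elim _ _)
  rw [← hy, Subsingleton.elim y 0, map_zero]

lemma ext_subsingleton₃ (X : ModuleCat A) (S : ShortComplex (ModuleCat A)) (hS : S.ShortExact)
    (i : ℕ)
    (h2 : Subsingleton (((Ext A (ModuleCat A) i).obj (op X)).obj S.X₂))
    (h1 : Subsingleton (((Ext A (ModuleCat A) (i + 1)).obj (op X)).obj S.X₁)) :
    Subsingleton (((Ext A (ModuleCat A) i).obj (op X)).obj S.X₃) := by
  let P : ProjectiveResolution X := (HasProjectiveResolution.out (Z := X)).some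
  have hT := mapSC_shortExact P S hS
  have hles := hT.homology_exact₃ i (i + 1) rfl
  refine subsingleton_of_moduleCat_iso (P.isoExt i S.X₃).symm ?_
  refine subsingleton_X₂_of_exact hles ?_ ?_
  · exact subsingleton_of_moduleCat_iso (P.isoExt i S.X₂) h2
  · exact subsingleton_of_moduleCat_iso (P.isoExt (i + 1) S.X₁) h1

lemma ext_subsingleton₂ (X : ModuleCat A) (S : ShortComplex (ModuleCat A)) (hS : S.ShortExact)
    (i : ℕ)
    (h1 : Subsingleton (((Ext A (ModuleCat A) i).obj (op X)).obj S.X₁))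
    (h3 : Subsingleton (((Ext A (ModuleCat A) i).obj (op X)).obj S.X₃)) :
    Subsingleton (((Ext A (ModuleCat A) i).obj (op X)).obj S.X₂) := by
  let P : ProjectiveResolution X := (HasProjectiveResolution.out (Z := X)).some
  have hT := mapSC_shortExact P S hS
  have hles := hT.homology_exact₂ i
  refine subsingleton_of_moduleCat_iso (P.isoExt i S.X₂).symm ?_
  refine subsingleton_X₂_of_exact hles ?_ ?_
  · exact subsingleton_of_moduleCat_iso (P.isoExt i S.X₁) h1
  · exact subsingleton_of_moduleCat_iso (P.isoExt i S.X₃) h3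

lemma ext_subsingleton_of_subsingleton (X Z : ModuleCat A) (h : Subsingleton Z) (i : ℕ) :
    Subsingleton (((Ext A (ModuleCat A) i).obj (op X)).obj Z) := by
  let P : ProjectiveResolution X := (HasProjectiveResolution.out (Z := X)).some
  refine subsingleton_of_moduleCat_iso (P.isoExt i Z).symm ?_
  have hz : IsZero ((P.complex.linearYonedaObj A Z).X i) := by
    refine @ModuleCat.isZero_of_subsingleton A _ _ ?_
    show Subsingleton (P.complex.X i ⟶ Z)
    exact ⟨fun a b => by ext x; exact Subsingleton.elim _ _⟩
  have : ((P.complex.linearYonedaObj A Z)).ExactAt i := by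
    rw [HomologicalComplex.exactAt_iff]
    exact ShortComplex.exact_of_isZero_X₂ _ hz
  rw [HomologicalComplex.exactAt_iff_isZero_homology] at this
  refine subsingleton_of_forall_eq 0 fun x => ?_
  have h0 : (𝟙 ((P.complex.linearYonedaObj A Z).homology i)) = 0 := this.eq_of_src _ _
  have := congrArg (fun f => f.hom x) h0
  simpa using this

lemma ext_pi (C : Type) [AddCommGroup C] [Module A C]
    (hC : ∀ i : ℕ, 0 < i →
      Subsingleton (((Ext A (ModuleCat A) i).obj (op (ModuleCat.of A C))).obj (ModuleCat.of A C)))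
    (n : ℕ) (i : ℕ) (hi : 0 < i) :
    Subsingleton (((Ext A (ModuleCat A) i).obj (op (ModuleCat.of A C))).obj
      (ModuleCat.of A (Fin n → C))) := by
  induction n with
  | zero =>
      exact ext_subsingleton_of_subsingleton _ _ (by infer_instance) i
  | succ n ih =>
      let f : ModuleCat.of A C ⟶ ModuleCat.of A (Fin (n + 1) → C) :=
        ModuleCat.ofHom (LinearMap.single A (fun _ : Fin (n + 1) => C) 0)
      let g : ModuleCat.of A (Fin (n + 1) → C) ⟶ ModuleCat.of A (Fin n → C) :=
        ModuleCat.ofHom (LinearMap.funLeft A C Fin.succ)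
      have hfg : f ≫ g = 0 := by
        ext c j
        show (Pi.single (M := fun _ : Fin (n + 1) => C) 0 c) j.succ = 0
        exact Pi.single_eq_of_ne (Fin.succ_ne_zero j) c
      have hS : (ShortComplex.mk f g hfg).ShortExact := by
        refine ShortComplex.ShortExact.mk' ?_ ?_ ?_
        · rw [ShortComplex.moduleCat_exact_iff]
          intro v hv
          refine ⟨v 0, ?_⟩
          funext j
          refine Fin.cases ?_ (fun k => ?_) j
          · exact Pi.single_eq_same (M := fun _ : Fin (n + 1) => C) 0 (v 0)
          · have hvk : v k.succ = 0 := congrFun hv k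
            refine (Pi.single_eq_of_ne (M := fun _ : Fin (n + 1) => C)
              (Fin.succ_ne_zero k) (v 0)).trans hvk.symm
        · rw [ModuleCat.mono_iff_injective]
          intro a b hab
          have := congrFun hab 0
          simpa [f] using this
        · rw [ModuleCat.epi_iff_surjective]
          intro v
          exact ⟨Fin.cons 0 v, funext fun j => by simp [g, LinearMap.funLeft]⟩
      exact ext_subsingleton₂ _ _ hS i (hC i hi) ih

lemma main_aux (C : Type) [AddCommGroup C] [Module A C]
    (hC : ∀ i : ℕ, 0 < i →
      Subsingleton (((Ext A (ModuleCat A) i).obj (op (ModuleCat.of A C))).obj (ModuleCat.of A C)))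
    (s : ℕ) :
    ∀ (Y : Type) (iY : AddCommGroup Y) (mY : @Module A Y _ iY.toAddCommMonoid),
      HasResolutionByOfLength A C Y s → ∀ i : ℕ, 0 < i →
      Subsingleton (((Ext A (ModuleCat A) i).obj (op (ModuleCat.of A C))).obj
        (@ModuleCat.of A _ Y iY mY)) := by
  induction s with
  | zero =>
      intro Y iY mY hres i hi
      obtain ⟨n, d, ε, hn, hsurj, hex0, hex⟩ := hres
      let K := LinearMap.ker ε
      let S : ShortComplex (ModuleCat A) := ShortComplex.mk
        (ModuleCat.ofHom K.subtype) (ModuleCat.ofHom ε)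
        (by ext x; exact x.2)
      have hS : S.ShortExact := by
        refine ShortComplex.ShortExact.mk' ?_ ?_ ?_
        · rw [ShortComplex.moduleCat_exact_iff]
          intro v hv
          exact ⟨⟨v, hv⟩, rfl⟩
        · rw [ModuleCat.mono_iff_injective]
          exact Subtype.val_injective
        · rw [ModuleCat.epi_iff_surjective]
          exact hsurj
      haveI : IsEmpty (Fin (n 1)) := by rw [hn 1 one_pos]; exact Fin.isEmpty
      have hK : Subsingleton K := by
        refine subsingleton_of_forall_eq 0 fun k => ?_
        obtain ⟨x, hx⟩ := (hex0 (k : Fin (n 0) → C)).1 k.2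
        have hx0 : x = 0 := Subsingleton.elim _ _
        refine Subtype.ext ?_
        rw [← hx, hx0, map_zero]
        rfl
      exact ext_subsingleton₃ (ModuleCat.of A C) S hS i (ext_pi C hC (n 0) i hi)
        (ext_subsingleton_of_subsingleton _ _ hK (i + 1))
  | succ s ih =>
      intro Y iY mY hres i hi
      obtain ⟨n, d, ε, hn, hsurj, hex0, hex⟩ := hres
      let K := LinearMap.ker ε
      let S : ShortComplex (ModuleCat A) := ShortComplex.mk
        (ModuleCat.ofHom K.subtype) (ModuleCat.ofHom ε)
        (by ext x; exact x.2)
      have hS : S.ShortExact := by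
        refine ShortComplex.ShortExact.mk' ?_ ?_ ?_
        · rw [ShortComplex.moduleCat_exact_iff]
          intro v hv
          exact ⟨⟨v, hv⟩, rfl⟩
        · rw [ModuleCat.mono_iff_injective]
          exact Subtype.val_injective
        · rw [ModuleCat.epi_iff_surjective]
          exact hsurj
      have hK : HasResolutionByOfLength A C K s := by
        refine ⟨fun j => n (j + 1), fun j => d (j + 1),
          (d 0).codRestrict K (fun x => LinearMap.mem_ker.mpr ((hex0 (d 0 x)).2 ⟨x, rfl⟩)),
          fun j hj => hn (j + 1) (Nat.succ_lt_succ hj), ?_, ?_, fun j => hex (j + 1)⟩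
        · intro k
          obtain ⟨x, hx⟩ := (hex0 (k : Fin (n 0) → C)).1 k.2
          exact ⟨x, Subtype.ext hx⟩
        · intro y
          rw [Subtype.ext_iff]
          exact hex 0 y
      exact ext_subsingleton₃ (ModuleCat.of A C) S hS i (ext_pi C hC (n 0) i hi)
        (ih K inferInstance inferInstance hK (i + 1) (Nat.succ_pos i))

end
end Helpers

/-- If `C` is a semidualizing module over the commutative noetherian local ring `A` and `Y`
is a finitely generated module of finite `C`-dimension, then `Ext_A^i(C,Y) = 0` for `i > 0`. -/
theorem ext_vanishing_of_finite_cdim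
    (A : Type) [CommRing A] [IsNoetherianRing A] [IsLocalRing A]
    (C : Type) [AddCommGroup C] [Module A C] [Module.Finite A C]
    (hC : IsSemidualizing A C)
    (Y : Type) [AddCommGroup Y] [Module A Y] [Module.Finite A Y]
    (hY : HasFiniteCDim A C Y) :
    ∀ i : ℕ, 0 < i →
      Subsingleton (((Ext A (ModuleCat A) i).obj (op (ModuleCat.of A C))).obj
        (ModuleCat.of A Y)) := by
  obtain ⟨s, hs⟩ := hY
  exact main_aux C hC.2 s Y inferInstance inferInstance hs
end

section
/- Let A be a commutative noetherian local ring, C a semidualizing A-module, and Y a finitely generated A-module of finite C-dimension. Then the natural evaluation map C ⊗_A Hom_A(C,Y) → Y, sending c ⊗ f to f(c), is an isomorphism. -/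
open CategoryTheory Opposite

section Aux

open LinearMap

variable (A : Type) [CommRing A] (C : Type) [AddCommGroup C] [Module A C]

/-- The evaluation map `C ⊗ Hom(C,Y) → Y`. -/
noncomputable def evMap (Y : Type) [AddCommGroup Y] [Module A Y] :
    TensorProduct A C (C →ₗ[A] Y) →ₗ[A] Y :=
  TensorProduct.lift (LinearMap.flip (LinearMap.id : (C →ₗ[A] Y) →ₗ[A] (C →ₗ[A] Y)))

@[simp] lemma evMap_tmul (Y : Type) [AddCommGroup Y] [Module A Y] (c : C) (f : C →ₗ[A] Y) :
    evMap A C Y (c ⊗ₜ f) = f c := rfl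

/-- Naturality of evaluation. -/
lemma evMap_natural (Y Z : Type) [AddCommGroup Y] [Module A Y] [AddCommGroup Z] [Module A Z]
    (φ : Y →ₗ[A] Z) (t : TensorProduct A C (C →ₗ[A] Y)) :
    evMap A C Z (lTensor C (llcomp A C Y Z φ) t) = φ (evMap A C Y t) := by
  induction t with
  | zero => simp
  | tmul c f => simp
  | add x y hx hy => simp [map_add, hx, hy]

lemma lTensor_llcomp_llcomp (X Y Z : Type) [AddCommGroup X] [Module A X]
    [AddCommGroup Y] [Module A Y] [AddCommGroup Z] [Module A Z]
    (φ : Y →ₗ[A] Z) (ψ : X →ₗ[A] Y) (t : TensorProduct A C (C →ₗ[A] X)) :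
    lTensor C (llcomp A C Y Z φ) (lTensor C (llcomp A C X Y ψ) t) =
      lTensor C (llcomp A C X Z (φ ∘ₗ ψ)) t := by
  rw [← LinearMap.lTensor_comp_apply]
  rfl

/-- Base case: evaluation is bijective for finite direct sums of copies of `C`,
using only surjectivity of `A → End C`. -/
lemma evMap_pi_bijective
    (hsurj : Function.Surjective (algebraMap A (Module.End A C))) (m : ℕ) :
    Function.Bijective (evMap A C (Fin m → C)) := by
  classical
  -- the inverse map
  let β : (Fin m → C) →ₗ[A] TensorProduct A C (C →ₗ[A] (Fin m → C)) :=
    ∑ j : Fin m, ((TensorProduct.mk A C (C →ₗ[A] (Fin m → C))).flip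
      (LinearMap.single A (fun _ : Fin m => C) j)) ∘ₗ (LinearMap.proj j)
  have hβ : ∀ x, β x = ∑ j : Fin m, x j ⊗ₜ LinearMap.single A (fun _ : Fin m => C) j := by
    intro x
    simp [β, LinearMap.sum_apply]
  have h1 : ∀ x, evMap A C (Fin m → C) (β x) = x := by
    intro x
    rw [hβ, map_sum]
    simp only [evMap_tmul, LinearMap.single_apply]
    exact Finset.univ_sum_single x
  have h2 : ∀ t, β (evMap A C (Fin m → C) t) = t := by
    intro t
    induction t with
    | zero => simp
    | add x y hx hy => simp [map_add, hx, hy]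
    | tmul c f =>
      rw [evMap_tmul, hβ]
      choose a ha using fun j => hsurj ((LinearMap.proj j : (Fin m → C) →ₗ[A] C) ∘ₗ f)
      have key : ∀ (c : C) (j : Fin m), f c j = a j • c := by
        intro c j
        have := congrArg (fun (g : Module.End A C) => g c) (ha j)
        simpa [Module.algebraMap_end_apply] using this.symm
      have : ∀ j : Fin m, f c j ⊗ₜ[A] LinearMap.single A (fun _ : Fin m => C) j
          = c ⊗ₜ[A] (a j • LinearMap.single A (fun _ : Fin m => C) j) := by
        intro j
        rw [key c j, TensorProduct.smul_tmul]
      rw [Finset.sum_congr rfl (fun j _ => this j), ← TensorProduct.tmul_sum]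
      congr 1
      ext x i
      simp only [LinearMap.coe_sum, Finset.sum_apply, LinearMap.smul_apply,
        LinearMap.single_apply, Pi.smul_apply]
      rw [Finset.sum_eq_single i]
      · simp [key x i]
      · intro b _ hb
        simp [Pi.single_eq_of_ne' hb]
      · simp
  exact ⟨Function.LeftInverse.injective h2, fun x => ⟨β x, h1 x⟩⟩

end Aux

section Aux2

open LinearMap

variable (A : Type) [CommRing A] (C : Type) [AddCommGroup C] [Module A C]

lemma factor_thru_surjective {M N W : Type} [AddCommGroup M] [Module A M]
    [AddCommGroup N] [Module A N] [AddCommGroup W] [Module A W]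
    (η : M →ₗ[A] N) (q : M →ₗ[A] W) (hs : Function.Surjective η)
    (hk : ker η ≤ ker q) : ∃ r : N →ₗ[A] W, r ∘ₗ η = q := by
  let e := η.quotKerEquivOfSurjective hs
  refine ⟨(ker η).liftQ q hk ∘ₗ e.symm.toLinearMap, ?_⟩
  ext x
  have hx : e.symm (η x) = Submodule.Quotient.mk x := by
    apply e.injective
    rw [LinearEquiv.apply_symm_apply]
    simp [e, LinearMap.quotKerEquivOfSurjective]
  simp [hx]

/-- Shifting a resolution: the kernel of the augmentation has a resolution one shorter. -/
lemma ker_hasResolution (Y : Type) [AddCommGroup Y] [Module A Y] (s : ℕ)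
    (n : ℕ → ℕ) (d : ∀ i : ℕ, ((Fin (n (i + 1)) → C) →ₗ[A] (Fin (n i) → C)))
    (ε : (Fin (n 0) → C) →ₗ[A] Y)
    (hlen : ∀ i, s + 1 < i → n i = 0)
    (hex0 : Function.Exact (d 0) ε) (hexd : ∀ i : ℕ, Function.Exact (d (i + 1)) (d i)) :
    HasResolutionByOfLength A C (ker ε) s := by
  have hmem : ∀ x, d 0 x ∈ ker ε := fun x => by
    rw [LinearMap.mem_ker, hex0]; exact ⟨x, rfl⟩
  refine ⟨fun i => n (i + 1), fun i => d (i + 1), (d 0).codRestrict (ker ε) hmem,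
    fun i hi => hlen (i + 1) (by omega), ?_, ?_, fun i => hexd (i + 1)⟩
  · rintro ⟨y, hy⟩
    rw [LinearMap.mem_ker, hex0] at hy
    obtain ⟨x, hx⟩ := hy
    exact ⟨x, Subtype.ext hx⟩
  · intro x
    constructor
    · intro hx
      have : d 0 x = 0 := congrArg Subtype.val hx
      rw [hexd 0] at this
      exact this
    · rintro ⟨z, rfl⟩
      apply Subtype.ext
      have : d 0 (d 1 z) = 0 := by rw [hexd 0]; exact ⟨z, rfl⟩
      simpa using this

/-- Propagation of Ext-vanishing (concretely, as a factorization property through a fixed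
projective resolution of `C`) to all modules of finite `C`-dimension. -/
lemma extVanish_of_res
    (F : ℕ → Type) [∀ i, AddCommGroup (F i)] [∀ i, Module A (F i)]
    [hF : ∀ i, Module.Projective A (F i)]
    (δ : ∀ i, F (i + 1) →ₗ[A] F i) (η : F 0 →ₗ[A] C)
    (hex0 : Function.Exact (δ 0) η)
    (hδδ : ∀ i, δ i ∘ₗ δ (i + 1) = 0)
    (hext : ∀ i (f : F (i + 1) →ₗ[A] C), f ∘ₗ δ (i + 1) = 0 →
      ∃ g : F i →ₗ[A] C, f = g ∘ₗ δ i) :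
    ∀ (s : ℕ) (Y : Type) [AddCommGroup Y] [Module A Y],
      HasResolutionByOfLength A C Y s →
      ∀ i (f : F (i + 1) →ₗ[A] Y), f ∘ₗ δ (i + 1) = 0 →
        ∃ g : F i →ₗ[A] Y, f = g ∘ₗ δ i := by
  classical
  -- first, factorization for finite direct sums of copies of `C`
  have hextPi : ∀ (m : ℕ) (i : ℕ) (f : F (i + 1) →ₗ[A] (Fin m → C)),
      f ∘ₗ δ (i + 1) = 0 → ∃ g : F i →ₗ[A] (Fin m → C), f = g ∘ₗ δ i := by
    intro m i f hf
    have hcomp : ∀ j : Fin m, ((LinearMap.proj j : (Fin m → C) →ₗ[A] C) ∘ₗ f) ∘ₗ δ (i + 1) = 0 := by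
      intro j
      ext x
      have := congrArg (fun z : Fin m → C => z j) (DFunLike.congr_fun hf x)
      simpa using this
    choose g hg using fun j => hext i _ (hcomp j)
    refine ⟨LinearMap.pi g, ?_⟩
    apply LinearMap.ext
    intro x
    funext j
    have := DFunLike.congr_fun (hg j) x
    simpa using this
  intro s
  induction s with
  | zero =>
    intro Y _ _ hres i f hf
    obtain ⟨n, d, ε, hlen, hsurj, hex, hexd⟩ := hres
    -- `ε` is bijective
    have hd0 : ∀ x, d 0 x = 0 := by
      intro x
      have h1 : (1 : ℕ) > 0 := Nat.one_pos
      have : Subsingleton (Fin (n 1) → C) := by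
        rw [hlen 1 h1]
        infer_instance
      rw [Subsingleton.elim x 0, map_zero]
    have hinj : Function.Injective ε := by
      rw [← LinearMap.ker_eq_bot]
      ext y
      simp only [LinearMap.mem_ker, Submodule.mem_bot]
      rw [hex y]
      constructor
      · rintro ⟨x, rfl⟩; exact hd0 x
      · rintro rfl; exact ⟨0, by simp [hd0]⟩
    let e : (Fin (n 0) → C) ≃ₗ[A] Y := LinearEquiv.ofBijective ε ⟨hinj, hsurj⟩
    have hf' : (e.symm.toLinearMap ∘ₗ f) ∘ₗ δ (i + 1) = 0 := by
      ext x
      have := DFunLike.congr_fun hf x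
      simp only [LinearMap.comp_apply] at this ⊢
      rw [this]
      simp
    obtain ⟨g, hg⟩ := hextPi (n 0) i _ hf'
    refine ⟨e.toLinearMap ∘ₗ g, ?_⟩
    ext x
    have := DFunLike.congr_fun hg x
    simp only [LinearMap.comp_apply] at this ⊢
    rw [← this]
    simp [e]
  | succ s IH =>
    intro Y _ _ hres i f hf
    obtain ⟨n, d, ε, hlen, hsurj, hex, hexd⟩ := hres
    have hres₁ : HasResolutionByOfLength A C (ker ε) s :=
      ker_hasResolution A C Y s n d ε hlen hex hexd
    -- lift `f` through `ε`
    obtain ⟨h, hh⟩ := Module.projective_lifting_property ε f hsurj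
    -- the composite `h ∘ δ (i+1)` lands in `ker ε`
    have hmem : ∀ x, h (δ (i + 1) x) ∈ ker ε := by
      intro x
      rw [LinearMap.mem_ker]
      have h1 := DFunLike.congr_fun hh (δ (i + 1) x)
      have h2 := DFunLike.congr_fun hf x
      simp only [LinearMap.comp_apply] at h1 h2
      rw [h1, h2]
      rfl
    let u : F (i + 2) →ₗ[A] ker ε := (h ∘ₗ δ (i + 1)).codRestrict (ker ε) hmem
    have hu : u ∘ₗ δ (i + 2) = 0 := by
      apply LinearMap.ext
      intro x
      apply Subtype.ext
      have := DFunLike.congr_fun (hδδ (i + 1)) x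
      simp only [LinearMap.comp_apply, LinearMap.zero_apply] at this ⊢
      simp [u, LinearMap.codRestrict, this]
    obtain ⟨v, hv⟩ := IH (ker ε) hres₁ (i + 1) u hu
    -- `h - ι ∘ v` is killed by `δ (i+1)`
    have hquot : (h - (ker ε).subtype ∘ₗ v) ∘ₗ δ (i + 1) = 0 := by
      apply LinearMap.ext
      intro x
      have hvx := DFunLike.congr_fun hv x
      have : ((ker ε).subtype) (v ((δ (i + 1)) x)) = h ((δ (i + 1)) x) :=
        calc ((ker ε).subtype) (v ((δ (i + 1)) x))
            = ((ker ε).subtype) ((v ∘ₗ δ (i + 1)) x) := rfl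
          _ = ((ker ε).subtype) (u x) := by rw [hvx]
          _ = h ((δ (i + 1)) x) := rfl
      simp only [LinearMap.comp_apply, LinearMap.sub_apply, LinearMap.zero_apply, this]
      simp
    obtain ⟨w, hw⟩ := hextPi (n 0) i _ hquot
    refine ⟨ε ∘ₗ w, ?_⟩
    apply LinearMap.ext
    intro x
    have hwx := DFunLike.congr_fun hw x
    simp only [LinearMap.comp_apply, LinearMap.sub_apply] at hwx ⊢
    have hεv : ε ((ker ε).subtype (v x)) = 0 := (v x).2
    have hhx := DFunLike.congr_fun hh x
    simp only [LinearMap.comp_apply] at hhx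
    rw [← hwx]
    rw [map_sub, hεv, sub_zero, hhx]

end Aux2

section Aux3

open LinearMap

variable (A : Type) [CommRing A] (C : Type) [AddCommGroup C] [Module A C]

/-- Main induction: evaluation is bijective for every module with a finite resolution by
finite direct sums of copies of `C`. -/
lemma evMap_bijective_of_res
    (hsurj : Function.Surjective (algebraMap A (Module.End A C)))
    (F : ℕ → Type) [∀ i, AddCommGroup (F i)] [∀ i, Module A (F i)]
    [hF : ∀ i, Module.Projective A (F i)]
    (δ : ∀ i, F (i + 1) →ₗ[A] F i) (η : F 0 →ₗ[A] C)
    (hηs : Function.Surjective η)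
    (hex0 : Function.Exact (δ 0) η)
    (hδδ : ∀ i, δ i ∘ₗ δ (i + 1) = 0)
    (hext : ∀ i (f : F (i + 1) →ₗ[A] C), f ∘ₗ δ (i + 1) = 0 →
      ∃ g : F i →ₗ[A] C, f = g ∘ₗ δ i) :
    ∀ (s : ℕ) (Y : Type) [AddCommGroup Y] [Module A Y],
      HasResolutionByOfLength A C Y s → Function.Bijective (evMap A C Y) := by
  intro s
  induction s with
  | zero =>
    intro Y _ _ hres
    obtain ⟨n, d, ε, hlen, hεsurj, hex, hexd⟩ := hres
    have hd0 : ∀ x, d 0 x = 0 := by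
      intro x
      have : Subsingleton (Fin (n 1) → C) := by
        rw [hlen 1 Nat.one_pos]
        infer_instance
      rw [Subsingleton.elim x 0, map_zero]
    have hinj : Function.Injective ε := by
      rw [← LinearMap.ker_eq_bot]
      ext y
      simp only [LinearMap.mem_ker, Submodule.mem_bot]
      rw [hex y]
      constructor
      · rintro ⟨x, rfl⟩; exact hd0 x
      · rintro rfl; exact ⟨0, by simp [hd0]⟩
    let e : (Fin (n 0) → C) ≃ₗ[A] Y := LinearEquiv.ofBijective ε ⟨hinj, hεsurj⟩
    have hbase := evMap_pi_bijective A C hsurj (n 0)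
    constructor
    · -- injectivity
      rw [injective_iff_map_eq_zero]
      intro t ht
      set t' := lTensor C (llcomp A C Y (Fin (n 0) → C) e.symm.toLinearMap) t with ht'
      have h1 : evMap A C (Fin (n 0) → C) t' = 0 := by
        rw [ht', evMap_natural, ht, map_zero]
      have h2 : t' = 0 := by
        rw [← map_zero (evMap A C (Fin (n 0) → C))] at h1
        exact hbase.1 h1
      have h3 : lTensor C (llcomp A C (Fin (n 0) → C) Y e.toLinearMap) t' = t := by
        rw [ht', lTensor_llcomp_llcomp]
        have : e.toLinearMap ∘ₗ e.symm.toLinearMap = LinearMap.id := by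
          ext y; simp
        rw [this]
        have : llcomp A C Y Y (LinearMap.id : Y →ₗ[A] Y) =
            (LinearMap.id : (C →ₗ[A] Y) →ₗ[A] (C →ₗ[A] Y)) := by
          ext f x; simp
        rw [this, lTensor_id, LinearMap.id_apply]
      rw [← h3, h2, map_zero]
    · -- surjectivity
      intro y
      obtain ⟨t, ht⟩ := hbase.2 (e.symm y)
      refine ⟨lTensor C (llcomp A C (Fin (n 0) → C) Y e.toLinearMap) t, ?_⟩
      rw [evMap_natural, ht]
      simp [e]
  | succ s IH =>
    intro Y _ _ hres
    obtain ⟨n, d, ε, hlen, hεsurj, hex, hexd⟩ := hres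
    have hres₁ : HasResolutionByOfLength A C (ker ε) s :=
      ker_hasResolution A C Y s n d ε hlen hex hexd
    have hbase := evMap_pi_bijective A C hsurj (n 0)
    have hIH := IH (ker ε) hres₁
    have hEV := extVanish_of_res A C F δ η hex0 hδδ hext s (ker ε) hres₁
    -- surjectivity of `Hom(C, ε)`
    have hcomp_surj : Function.Surjective (llcomp (σ₁₂ := RingHom.id A) A C (Fin (n 0) → C) Y ε) := by
      intro g
      obtain ⟨h, hh⟩ := Module.projective_lifting_property ε (g ∘ₗ η) hεsurj
      have hmem : ∀ x, h (δ 0 x) ∈ ker ε := by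
        intro x
        rw [LinearMap.mem_ker]
        have h1 := DFunLike.congr_fun hh (δ 0 x)
        simp only [LinearMap.comp_apply] at h1
        rw [h1]
        have : η (δ 0 x) = 0 := by
          rw [hex0]
          exact ⟨x, rfl⟩
        rw [this, map_zero]
      let u : F 1 →ₗ[A] ker ε := (h ∘ₗ δ 0).codRestrict (ker ε) hmem
      have hu : u ∘ₗ δ 1 = 0 := by
        apply LinearMap.ext
        intro x
        apply Subtype.ext
        have := DFunLike.congr_fun (hδδ 0) x
        simp only [LinearMap.comp_apply, LinearMap.zero_apply] at this ⊢
        simp [u, LinearMap.codRestrict, this]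
      obtain ⟨v, hv⟩ := hEV 0 u hu
      have hk : ker η ≤ ker (h - (ker ε).subtype ∘ₗ v) := by
        intro x hx
        rw [LinearMap.mem_ker] at hx ⊢
        have hx' : x ∈ Set.range (δ 0) := by rw [← hex0 x]; exact hx
        obtain ⟨z, rfl⟩ := hx'
        have hvz := DFunLike.congr_fun hv z
        have : ((ker ε).subtype) (v ((δ 0) z)) = h ((δ 0) z) :=
          calc ((ker ε).subtype) (v ((δ 0) z))
              = ((ker ε).subtype) ((v ∘ₗ δ 0) z) := rfl
            _ = ((ker ε).subtype) (u z) := by rw [hvz]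
            _ = h ((δ 0) z) := rfl
        simp only [LinearMap.sub_apply, LinearMap.comp_apply, this, sub_self]
      obtain ⟨r, hr⟩ := factor_thru_surjective A η _ hηs hk
      refine ⟨r, ?_⟩
      -- `ε ∘ₗ r = g`
      have : ε ∘ₗ r = g := by
        apply LinearMap.ext
        intro c
        obtain ⟨x, rfl⟩ := hηs c
        have hrx := DFunLike.congr_fun hr x
        simp only [LinearMap.comp_apply, LinearMap.sub_apply] at hrx ⊢
        rw [hrx]
        have hεv : ε ((ker ε).subtype (v x)) = 0 := (v x).2
        have hhx := DFunLike.congr_fun hh x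
        simp only [LinearMap.comp_apply] at hhx
        rw [map_sub, hεv, sub_zero, hhx]
      exact this
    constructor
    · -- injectivity
      rw [injective_iff_map_eq_zero]
      intro t ht
      obtain ⟨u, hu⟩ := (lTensor_surjective C hcomp_surj) t
      set x := evMap A C (Fin (n 0) → C) u with hx
      have hεx : ε x = 0 := by
        rw [hx, ← evMap_natural, hu, ht]
      have hxk : x ∈ ker ε := LinearMap.mem_ker.mpr hεx
      obtain ⟨w, hw⟩ := hIH.2 ⟨x, hxk⟩
      have hux : evMap A C (Fin (n 0) → C)
          (lTensor C (llcomp A C (ker ε) (Fin (n 0) → C) (ker ε).subtype) w) = x := by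
        rw [evMap_natural, hw]
        rfl
      have huw : u = lTensor C (llcomp A C (ker ε) (Fin (n 0) → C) (ker ε).subtype) w :=
        hbase.1 (by rw [hux, hx])
      rw [← hu, huw, lTensor_llcomp_llcomp]
      have hzero : ε ∘ₗ (ker ε).subtype = 0 := by
        apply LinearMap.ext
        intro z
        exact z.2
      rw [hzero, map_zero, LinearMap.lTensor_zero]
      rfl
    · -- surjectivity
      intro y
      obtain ⟨x, hx⟩ := hεsurj y
      obtain ⟨t, ht⟩ := hbase.2 x
      refine ⟨lTensor C (llcomp A C (Fin (n 0) → C) Y ε) t, ?_⟩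
      rw [evMap_natural, ht, hx]

end Aux3

open TensorProduct in
/-- If `C` is a semidualizing module over the commutative noetherian local ring `A` and `Y`
is a finitely generated module of finite `C`-dimension, then the evaluation map
`C ⊗_A Hom_A(C,Y) → Y`, `c ⊗ f ↦ f c`, is an isomorphism. -/
theorem evaluation_bijective_of_finite_cdim
    (A : Type) [CommRing A] [IsNoetherianRing A] [IsLocalRing A]
    (C : Type) [AddCommGroup C] [Module A C] [Module.Finite A C]
    (hC : IsSemidualizing A C)
    (Y : Type) [AddCommGroup Y] [Module A Y] [Module.Finite A Y]
    (hY : HasFiniteCDim A C Y) :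
    Function.Bijective
      (TensorProduct.lift
        (LinearMap.flip (LinearMap.id : (C →ₗ[A] Y) →ₗ[A] (C →ₗ[A] Y))) :
        C ⊗[A] (C →ₗ[A] Y) → Y) := by
  classical
  obtain ⟨hbij, hExt⟩ := hC
  obtain ⟨s, hres⟩ := hY
  let P := ProjectiveResolution.of (ModuleCat.of A C)
  let F : ℕ → Type := fun i => P.complex.X i
  let δ : ∀ i : ℕ, F (i + 1) →ₗ[A] F i := fun i => (P.complex.d (i + 1) i).hom
  let η : F 0 →ₗ[A] C := (P.π.f 0).hom
  have hF : ∀ i, Module.Projective A (F i) := fun i =>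
    (IsProjective.iff_projective (F i)).mpr (inferInstanceAs (Projective (P.complex.X i)))
  have hηs : Function.Surjective η := by
    exact (ModuleCat.epi_iff_surjective (P.π.f 0)).mp inferInstance
  have hex0 : Function.Exact (δ 0) η := by
    intro y
    constructor
    · intro hy
      exact (ShortComplex.moduleCat_exact_iff _).mp P.exact₀ y hy
    · rintro ⟨x, rfl⟩
      show P.π.f 0 ((P.complex.d 1 0) x) = 0
      have h := LinearMap.congr_fun (congrArg ModuleCat.Hom.hom P.complex_d_comp_π_f_zero) x
      rw [ModuleCat.hom_comp] at h
      exact h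
  have hδδ : ∀ i, δ i ∘ₗ δ (i + 1) = 0 := by
    intro i
    apply LinearMap.ext
    intro x
    show P.complex.d (i + 1) i ((P.complex.d (i + 2) (i + 1)) x) = 0
    have h := LinearMap.congr_fun (congrArg ModuleCat.Hom.hom (P.complex.d_comp_d (i + 2) (i + 1) i)) x
    rw [ModuleCat.hom_comp] at h
    exact h
  have hext : ∀ i (f : F (i + 1) →ₗ[A] C), f ∘ₗ δ (i + 1) = 0 →
      ∃ g : F i →ₗ[A] C, f = g ∘ₗ δ i := by
    intro i f hf
    let f' : P.complex.X (i + 1) ⟶ ModuleCat.of A C := ModuleCat.ofHom f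
    have hsub : Subsingleton (((Ext A (ModuleCat A) (i + 1)).obj
        (op (ModuleCat.of A C))).obj (ModuleCat.of A C)) := hExt (i + 1) (Nat.succ_pos i)
    have hzero : Limits.IsZero
        ((P.complex.linearYonedaObj A (ModuleCat.of A C)).homology (i + 1)) :=
      Limits.IsZero.of_iso (ModuleCat.isZero_of_subsingleton _)
        (P.isoExt (i + 1) (ModuleCat.of A C)).symm
    have hexact : (P.complex.linearYonedaObj A (ModuleCat.of A C)).ExactAt (i + 1) :=
      (HomologicalComplex.exactAt_iff_isZero_homology _ _).mpr hzero
    rw [HomologicalComplex.exactAt_iff' _ i (i + 1) (i + 2) (by simp) (by simp)] at hexact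
    rw [ShortComplex.moduleCat_exact_iff] at hexact
    have hfd : ((P.complex.linearYonedaObj A (ModuleCat.of A C)).sc' i (i + 1) (i + 2)).g f'
        = 0 := by
      show ((P.complex.linearYonedaObj A (ModuleCat.of A C)).d (i + 1) (i + 2)) f' = 0
      rw [ChainComplex.linearYonedaObj_d]
      show P.complex.d (i + 2) (i + 1) ≫ f' = 0
      ext x
      show f ((P.complex.d (i + 2) (i + 1)).hom x) = 0
      have h2 := DFunLike.congr_fun hf x
      exact h2
    obtain ⟨g, hg⟩ := hexact f' hfd
    refine ⟨g.hom, ?_⟩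
    have hg' : ((P.complex.linearYonedaObj A (ModuleCat.of A C)).d i (i + 1)) g = f' := hg
    rw [ChainComplex.linearYonedaObj_d] at hg'
    have hg'' : P.complex.d (i + 1) i ≫ (g : P.complex.X i ⟶ ModuleCat.of A C) = f' := hg'
    apply LinearMap.ext
    intro x
    have h3 := LinearMap.congr_fun (congrArg ModuleCat.Hom.hom hg'') x
    exact h3.symm
  exact evMap_bijective_of_res A C hbij.surjective F δ η hηs hex0 hδδ hext s Y hres (hF := hF)
end

section
/- Let A be a commutative noetherian local ring and C a semidualizing A-module. If 0 → X → Y → Z → 0 is a short exact sequence of finitely generated A-modules each of which has finite C-dimension, then the induced sequence 0 → Hom_A(C,X) → Hom_A(C,Y) → Hom_A(C,Z) → 0 is exact. -/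
open CategoryTheory Opposite

namespace SemidualizingAux

variable {A : Type} [CommRing A]

/-- Factor a linear map through a surjection whose kernel it kills. -/
lemma factor_surj {M N Q : Type} [AddCommGroup M] [Module A M] [AddCommGroup N] [Module A N]
    [AddCommGroup Q] [Module A Q] (e : M →ₗ[A] N) (he : Function.Surjective e)
    (t : M →ₗ[A] Q) (h : ∀ x, e x = 0 → t x = 0) : ∃ s : N →ₗ[A] Q, s ∘ₗ e = t := by
  refine ⟨(Submodule.liftQ (LinearMap.ker e) t (fun x hx => h x hx)).comp
    (e.quotKerEquivOfSurjective he).symm.toLinearMap, LinearMap.ext fun x => ?_⟩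
  have : (e.quotKerEquivOfSurjective he).symm (e x) = Submodule.Quotient.mk x := by
    rw [LinearEquiv.symm_apply_eq]
    simp [LinearMap.quotKerEquivOfSurjective, LinearMap.quotKerEquivRange]
  simp [this]
  rfl

/-- Factor a linear map through an injection containing its range. -/
lemma factor_inj {K P Q : Type} [AddCommGroup K] [Module A K] [AddCommGroup P] [Module A P]
    [AddCommGroup Q] [Module A Q] (u : K →ₗ[A] P) (hu : Function.Injective u)
    (t : Q →ₗ[A] P) (h : ∀ x, ∃ k, u k = t x) : ∃ θ : Q →ₗ[A] K, u ∘ₗ θ = t := by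
  refine ⟨(LinearEquiv.ofInjective u hu).symm.toLinearMap.comp
    (t.codRestrict (LinearMap.range u) (fun x => (h x).imp (fun k hk => hk))),
    LinearMap.ext fun x => ?_⟩
  have := (LinearEquiv.ofInjective u hu).apply_symm_apply
    ⟨t x, (h x).imp (fun k hk => hk)⟩
  have := congrArg Subtype.val this
  simp [LinearEquiv.ofInjective_apply]
  rfl

variable {C : Type} [AddCommGroup C] [Module A C]

/-- Vanishing of `Ext^{k+1}(C, M)`, stated concretely in terms of the chosen
projective resolution `P` of `C`. -/
def ExtV (P : ProjectiveResolution (ModuleCat.of A C)) (k : ℕ)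
    (M : Type) [AddCommGroup M] [Module A M] : Prop :=
  ∀ φ : ↥(P.complex.X (k+1)) →ₗ[A] M,
    φ.comp ((P.complex.d (k+2) (k+1)).hom : ↥(P.complex.X (k+2)) →ₗ[A] ↥(P.complex.X (k+1))) = 0 →
    ∃ ψ : ↥(P.complex.X k) →ₗ[A] M,
      φ = ψ.comp ((P.complex.d (k+1) k).hom : ↥(P.complex.X (k+1)) →ₗ[A] ↥(P.complex.X k))

lemma extV_of_subsingleton (P : ProjectiveResolution (ModuleCat.of A C)) (k : ℕ)
    (M : Type) [AddCommGroup M] [Module A M] [Subsingleton M] : ExtV P k M := by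
  intro φ _
  exact ⟨0, LinearMap.ext fun x => Subsingleton.elim _ _⟩

lemma extV_self (P : ProjectiveResolution (ModuleCat.of A C)) (k : ℕ)
    (h : Subsingleton (((Ext A (ModuleCat A) (k+1)).obj (op (ModuleCat.of A C))).obj
      (ModuleCat.of A C))) : ExtV P k C := by
  intro φ hφ
  set K := P.complex.linearYonedaObj A (ModuleCat.of A C) with hK
  have hiso := P.isoExt (R := A) (k+1) (ModuleCat.of A C)
  have hz : Limits.IsZero (K.homology (k+1)) :=
    (ModuleCat.isZero_of_subsingleton _).of_iso hiso.symm
  have hex : K.ExactAt (k+1) := (HomologicalComplex.exactAt_iff_isZero_homology _ _).2 hz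
  rw [HomologicalComplex.exactAt_iff' K k (k+1) (k+2) (by simp) (by simp)] at hex
  rw [ShortComplex.moduleCat_exact_iff] at hex
  obtain ⟨y, hy⟩ := hex (ModuleCat.ofHom φ) (congrArg ModuleCat.ofHom hφ)
  exact ⟨y.hom, congrArg ModuleCat.Hom.hom hy.symm⟩

lemma extV_pi (P : ProjectiveResolution (ModuleCat.of A C)) (k : ℕ)
    (hC : ExtV P k C) (n : ℕ) : ExtV P k (Fin n → C) := by
  intro φ hφ
  have hj : ∀ j : Fin n, ∃ ψj : ↥(P.complex.X k) →ₗ[A] C,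
      (LinearMap.proj j).comp φ = ψj.comp ((P.complex.d (k+1) k).hom : _ →ₗ[A] _) := by
    intro j
    refine hC ((LinearMap.proj j).comp φ) ?_
    rw [LinearMap.comp_assoc, hφ, LinearMap.comp_zero]
  choose ψj hψj using hj
  refine ⟨LinearMap.pi ψj, LinearMap.ext fun x => funext fun j => ?_⟩
  exact congrFun (congrArg (fun (f : _ →ₗ[A] C) => (f : _ → C)) (hψj j)) x

/-- Lift a linear map out of a (projective) term of the resolution along a surjection. -/
lemma lift_of_projective (P : ProjectiveResolution (ModuleCat.of A C)) (i : ℕ)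
    {Q M : Type} [AddCommGroup Q] [Module A Q] [AddCommGroup M] [Module A M]
    (v : Q →ₗ[A] M) (hv : Function.Surjective v) (φ : ↥(P.complex.X i) →ₗ[A] M) :
    ∃ φ' : ↥(P.complex.X i) →ₗ[A] Q, v ∘ₗ φ' = φ := by
  let vbar : ModuleCat.of A Q ⟶ ModuleCat.of A M := ModuleCat.ofHom v
  haveI : Epi vbar := (ModuleCat.epi_iff_surjective _).2 hv
  let φbar : P.complex.X i ⟶ ModuleCat.of A M := ModuleCat.ofHom φ
  exact ⟨(Projective.factorThru φbar vbar).hom, congrArg ModuleCat.Hom.hom (Projective.factorThru_comp φbar vbar)⟩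

/-- Dimension shifting: `Ext^{k+1}` of the target vanishes given the vanishing for the
middle and (one degree up) the kernel of a short exact sequence. -/
lemma extV_shift (P : ProjectiveResolution (ModuleCat.of A C)) (k : ℕ)
    {K Q M : Type} [AddCommGroup K] [Module A K] [AddCommGroup Q] [Module A Q]
    [AddCommGroup M] [Module A M]
    (u : K →ₗ[A] Q) (v : Q →ₗ[A] M) (hu : Function.Injective u)
    (huv : Function.Exact u v) (hv : Function.Surjective v)
    (hQ : ExtV P k Q) (hK : ExtV P (k+1) K) : ExtV P k M := by
  intro φ hφ
  obtain ⟨φ', hφ'⟩ := lift_of_projective P (k+1) v hv φ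
  have hland : ∀ x, ∃ kk, u kk = (φ' ∘ₗ ((P.complex.d (k+2) (k+1)).hom : _ →ₗ[A] _)) x := by
    intro x
    have : v ((φ' ∘ₗ ((P.complex.d (k+2) (k+1)).hom : _ →ₗ[A] _)) x) = 0 := by
      have h1 := congrFun (congrArg (fun (f : _ →ₗ[A] M) => (f : _ → M)) hφ')
        (((P.complex.d (k+2) (k+1)).hom : _ →ₗ[A] _) x)
      simp only [LinearMap.comp_apply] at h1 ⊢
      rw [h1]
      exact congrFun (congrArg (fun (f : _ →ₗ[A] M) => (f : _ → M)) hφ) x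
    exact (huv _).1 this
  obtain ⟨θ, hθ⟩ := factor_inj u hu (φ' ∘ₗ ((P.complex.d (k+2) (k+1)).hom : _ →ₗ[A] _)) hland
  have hθc : θ.comp ((P.complex.d (k+3) (k+2)).hom : _ →ₗ[A] _) = 0 := by
    have hdd : (((P.complex.d (k+2) (k+1)).hom : _ →ₗ[A] _).comp
        ((P.complex.d (k+3) (k+2)).hom : _ →ₗ[A] _) : _ →ₗ[A] _) = 0 :=
      congrArg ModuleCat.Hom.hom (P.complex.d_comp_d (k+3) (k+2) (k+1))
    apply LinearMap.ext
    intro x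
    apply hu
    have h1 := congrFun (congrArg (fun (f : _ →ₗ[A] Q) => (f : _ → Q)) hθ)
      (((P.complex.d (k+3) (k+2)).hom : _ →ₗ[A] _) x)
    simp only [LinearMap.comp_apply, LinearMap.zero_apply, map_zero] at h1 ⊢
    rw [h1]
    have h2 := congrFun (congrArg (fun (f : _ →ₗ[A] _) => (f : _ → _)) hdd) x
    simp only [LinearMap.comp_apply, LinearMap.zero_apply] at h2
    rw [h2, map_zero]
  obtain ⟨η, hη⟩ := hK θ hθc
  set φ'' : ↥(P.complex.X (k+1)) →ₗ[A] Q := φ' - u ∘ₗ η with hφ''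
  have hφ''c : φ''.comp ((P.complex.d (k+2) (k+1)).hom : _ →ₗ[A] _) = 0 := by
    rw [hφ'', LinearMap.sub_comp, LinearMap.comp_assoc, ← hη, hθ, sub_self]
  obtain ⟨ψ, hψ⟩ := hQ φ'' hφ''c
  refine ⟨v ∘ₗ ψ, LinearMap.ext fun x => ?_⟩
  have h1 := congrFun (congrArg (fun (f : _ →ₗ[A] Q) => (f : _ → Q)) hψ) x
  have h2 := congrFun (congrArg (fun (f : _ →ₗ[A] M) => (f : _ → M)) hφ') x
  have h3 : v (u (η x)) = 0 := huv.apply_apply_eq_zero (η x)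
  simp only [LinearMap.comp_apply, hφ'', LinearMap.sub_apply] at h1 h2 ⊢
  rw [← h2, ← h1]
  simp [h3]

/-- `Ext^{k+1}(C,M) = 0` for every `M` with a finite resolution by sums of copies of `C`. -/
lemma extV_of_resolution (P : ProjectiveResolution (ModuleCat.of A C))
    (hCv : ∀ k, ExtV P k C) :
    ∀ (s : ℕ) (M : Type) [AddCommGroup M] [Module A M],
      HasResolutionByOfLength A C M s → ∀ k, ExtV P k M := by
  intro s
  induction s with
  | zero =>
    intro M _ _ hres k
    obtain ⟨n, d, ε, hn, hsurj, hex0, hd⟩ := hres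
    set Kser := LinearMap.ker ε with hKser
    haveI : Subsingleton ↥Kser := by
      constructor
      rintro ⟨x, hx⟩ ⟨y, hy⟩
      have h1 : n 1 = 0 := hn 1 one_pos
      haveI : IsEmpty (Fin (n 1)) := by rw [h1]; exact Fin.isEmpty'
      have hz : ∀ z : Fin (n 0) → C, ε z = 0 → z = 0 := by
        intro z hzz
        obtain ⟨w, hw⟩ := (hex0 z).1 hzz
        have : w = 0 := Subsingleton.elim _ _
        rw [this, map_zero] at hw
        exact hw.symm
      have hx0 := hz x hx
      have hy0 := hz y hy
      simp [hx0, hy0]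
    have hexact : Function.Exact (Kser.subtype) ε := by
      rw [LinearMap.exact_iff, Submodule.range_subtype]
    exact extV_shift P k Kser.subtype ε (Submodule.injective_subtype _) hexact hsurj
      (extV_pi P k (hCv k) (n 0)) (extV_of_subsingleton P (k+1) ↥Kser)
  | succ s ih =>
    intro M _ _ hres k
    obtain ⟨n, d, ε, hn, hsurj, hex0, hd⟩ := hres
    set Kser := LinearMap.ker ε with hKser
    have hexact : Function.Exact (Kser.subtype) ε := by
      rw [LinearMap.exact_iff, Submodule.range_subtype]
    -- K has a resolution of length s
    have hKres : HasResolutionByOfLength A C ↥Kser s := by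
      refine ⟨fun i => n (i+1), fun i => d (i+1),
        (d 0).codRestrict Kser (fun x => (hex0 (d 0 x)).2 ⟨x, rfl⟩), ?_, ?_, ?_, ?_⟩
      · intro i hi
        exact hn (i+1) (by omega)
      · rintro ⟨y, hy⟩
        obtain ⟨x, hx⟩ := (hex0 y).1 hy
        exact ⟨x, Subtype.ext hx⟩
      · intro y
        constructor
        · intro hy
          have : d 0 y = 0 := congrArg Subtype.val hy
          exact (hd 0 y).1 this
        · rintro ⟨x, rfl⟩
          exact Subtype.ext ((hd 0).apply_apply_eq_zero x)
      · intro i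
        exact hd (i+1)
    exact extV_shift P k Kser.subtype ε (Submodule.injective_subtype _) hexact hsurj
      (extV_pi P k (hCv k) (n 0)) (ih ↥Kser hKres (k+1))

/-- The key surjectivity: if `Ext^1(C,K)` vanishes then `Hom(C,-)` preserves the
surjection in a short exact sequence with kernel `K`. -/
lemma hom_surjective (P : ProjectiveResolution (ModuleCat.of A C))
    {K Q M : Type} [AddCommGroup K] [Module A K] [AddCommGroup Q] [Module A Q]
    [AddCommGroup M] [Module A M]
    (u : K →ₗ[A] Q) (v : Q →ₗ[A] M) (hu : Function.Injective u)
    (huv : Function.Exact u v) (hv : Function.Surjective v)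
    (hK : ExtV P 0 K) (ψ : C →ₗ[A] M) : ∃ σ : C →ₗ[A] Q, v ∘ₗ σ = ψ := by
  -- the augmentation of the resolution
  set ε : ↥(P.complex.X 0) →ₗ[A] C := ((P.π.f 0).hom : ↥(P.complex.X 0) →ₗ[A] C) with hε
  have hεsurj : Function.Surjective ε := (ModuleCat.epi_iff_surjective (P.π.f 0)).1 inferInstance
  have hεexact : Function.Exact ((P.complex.d 1 0).hom : _ →ₗ[A] _) ε := by
    have hz : P.complex.d 1 0 ≫ P.π.f 0 = 0 := P.complex_d_comp_π_f_zero
    have hex := ShortComplex.exact_of_g_is_cokernel (ShortComplex.mk _ _ hz)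
      P.isColimitCokernelCofork
    rw [ShortComplex.moduleCat_exact_iff] at hex
    intro y
    constructor
    · intro hy; exact hex y hy
    · rintro ⟨x, rfl⟩
      exact LinearMap.congr_fun (congrArg ModuleCat.Hom.hom hz) x
  obtain ⟨τ, hτ⟩ := lift_of_projective P 0 v hv (ψ ∘ₗ ε)
  have hland : ∀ x, ∃ kk, u kk = (τ ∘ₗ ((P.complex.d 1 0).hom : _ →ₗ[A] _)) x := by
    intro x
    have h1 : v ((τ ∘ₗ ((P.complex.d 1 0).hom : _ →ₗ[A] _)) x) = 0 := by
      have h2 := congrFun (congrArg (fun (f : _ →ₗ[A] M) => (f : _ → M)) hτ)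
        (((P.complex.d 1 0).hom : _ →ₗ[A] _) x)
      simp only [LinearMap.comp_apply] at h2 ⊢
      rw [h2]
      have h3 : ε (((P.complex.d 1 0).hom : _ →ₗ[A] _) x) = 0 := hεexact.apply_apply_eq_zero x
      rw [h3, map_zero]
    exact (huv _).1 h1
  obtain ⟨θ, hθ⟩ := factor_inj u hu (τ ∘ₗ ((P.complex.d 1 0).hom : _ →ₗ[A] _)) hland
  have hθc : θ.comp ((P.complex.d 2 1).hom : _ →ₗ[A] _) = 0 := by
    have hdd : (((P.complex.d 1 0).hom : _ →ₗ[A] _).comp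
        ((P.complex.d 2 1).hom : _ →ₗ[A] _) : _ →ₗ[A] _) = 0 := congrArg ModuleCat.Hom.hom (P.complex.d_comp_d 2 1 0)
    apply LinearMap.ext
    intro x
    apply hu
    have h1 := congrFun (congrArg (fun (f : _ →ₗ[A] Q) => (f : _ → Q)) hθ)
      (((P.complex.d 2 1).hom : _ →ₗ[A] _) x)
    simp only [LinearMap.comp_apply, LinearMap.zero_apply, map_zero] at h1 ⊢
    rw [h1]
    have h2 := congrFun (congrArg (fun (f : _ →ₗ[A] _) => (f : _ → _)) hdd) x
    simp only [LinearMap.comp_apply, LinearMap.zero_apply] at h2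
    rw [h2, map_zero]
  obtain ⟨η, hη⟩ := hK θ hθc
  set τ' : ↥(P.complex.X 0) →ₗ[A] Q := τ - u ∘ₗ η with hτ'
  have hτ'c : τ'.comp ((P.complex.d 1 0).hom : _ →ₗ[A] _) = 0 := by
    rw [hτ', LinearMap.sub_comp, LinearMap.comp_assoc, ← hη, hθ, sub_self]
  obtain ⟨σ, hσ⟩ := factor_surj ε hεsurj τ' (fun x hx => by
    obtain ⟨y, hy⟩ := (hεexact x).1 hx
    rw [← hy]
    exact congrFun (congrArg (fun (f : _ →ₗ[A] Q) => (f : _ → Q)) hτ'c) y)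
  refine ⟨σ, ?_⟩
  have hfac : ∀ x, v (σ (ε x)) = ψ (ε x) := by
    intro x
    have h1 := congrFun (congrArg (fun (f : _ →ₗ[A] Q) => (f : _ → Q)) hσ) x
    have h2 := congrFun (congrArg (fun (f : _ →ₗ[A] M) => (f : _ → M)) hτ) x
    have h3 : v (u (η x)) = 0 := huv.apply_apply_eq_zero (η x)
    simp only [LinearMap.comp_apply] at h1 h2 ⊢
    rw [h1, hτ', LinearMap.sub_apply, LinearMap.comp_apply, map_sub, h3, sub_zero, h2]
  apply LinearMap.ext
  intro c
  obtain ⟨x, rfl⟩ := hεsurj c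
  exact hfac x

end SemidualizingAux

open SemidualizingAux in
/-- If `C` is a semidualizing module over the commutative noetherian local ring `A` and
`0 → X → Y → Z → 0` is a short exact sequence of finitely generated modules of finite
`C`-dimension, then `0 → Hom(C,X) → Hom(C,Y) → Hom(C,Z) → 0` is exact. -/
theorem hom_preserves_shortExact_of_finite_cdim
    (A : Type) [CommRing A] [IsNoetherianRing A] [IsLocalRing A]
    (C : Type) [AddCommGroup C] [Module A C] [Module.Finite A C]
    (hC : IsSemidualizing A C)
    (X Y Z : Type) [AddCommGroup X] [Module A X] [Module.Finite A X]
    [AddCommGroup Y] [Module A Y] [Module.Finite A Y]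
    [AddCommGroup Z] [Module A Z] [Module.Finite A Z]
    (hX : HasFiniteCDim A C X) (hY : HasFiniteCDim A C Y) (hZ : HasFiniteCDim A C Z)
    (f : X →ₗ[A] Y) (g : Y →ₗ[A] Z)
    (hf : Function.Injective f) (hfg : Function.Exact f g) (hg : Function.Surjective g) :
    Function.Injective (fun φ : C →ₗ[A] X => f ∘ₗ φ) ∧
    Function.Exact (fun φ : C →ₗ[A] X => f ∘ₗ φ) (fun ψ : C →ₗ[A] Y => g ∘ₗ ψ) ∧
    Function.Surjective (fun ψ : C →ₗ[A] Y => g ∘ₗ ψ) := by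
  classical
  obtain ⟨P⟩ : Nonempty (ProjectiveResolution (ModuleCat.of A C)) :=
    ⟨ProjectiveResolution.of _⟩
  have hCv : ∀ k, ExtV P k C := fun k => extV_self P k (hC.2 (k+1) k.succ_pos)
  refine ⟨?_, ?_, ?_⟩
  · -- injectivity
    intro φ₁ φ₂ h
    apply LinearMap.ext
    intro c
    exact hf (congrFun (congrArg (fun (f : _ →ₗ[A] Y) => (f : _ → Y)) h) c)
  · -- exactness in the middle
    intro ψ
    constructor
    · intro hψ
      have hmem : ∀ c, ∃ x, f x = ψ c := by
        intro c
        refine (hfg (ψ c)).1 ?_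
        exact congrFun (congrArg (fun (f : _ →ₗ[A] Z) => (f : _ → Z)) hψ) c
      obtain ⟨φ, hφ⟩ := factor_inj f hf ψ hmem
      exact ⟨φ, hφ⟩
    · rintro ⟨φ, rfl⟩
      apply LinearMap.ext
      intro c
      exact hfg.apply_apply_eq_zero (φ c)
  · -- surjectivity
    intro ψ
    obtain ⟨s, hres⟩ := hX
    have hV0X : ExtV P 0 X := extV_of_resolution P hCv s X hres 0
    obtain ⟨σ, hσ⟩ := hom_surjective P f g hf hfg hg hV0X ψ
    exact ⟨σ, hσ⟩
end

section
/- Let A be a commutative noetherian local ring, C a semidualizing A-module, and 0 → C_s → C_{s−1} → ⋯ → C_1 → C_0 → Y → 0 a resolution of a finitely generated module Y in which each C_i is a finite direct sum of copies of C. Then applying Hom_A(C,−) to this resolution yields an exact sequence 0 → Hom_A(C,C_s) → ⋯ → Hom_A(C,C_0) → Hom_A(C,Y) → 0 in which each Hom_A(C,C_i) is a finitely generated free A-module; that is, the image is a free resolution of Hom_A(C,Y). -/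
open CategoryTheory Opposite

/-! ### Auxiliary machinery -/

section SemidualizingAux

variable {A : Type} [CommRing A]
variable (F : ℕ → Type) [∀ i, AddCommGroup (F i)] [∀ i, Module A (F i)]
variable (δ : ∀ i : ℕ, F (i + 1) →ₗ[A] F i)

/-- Exactness of `Hom(F•, W)` in positive degrees. -/
def SemidualizingAux.HomExact (W : Type) [AddCommGroup W] [Module A W] : Prop :=
  ∀ (j : ℕ) (g : F (j + 1) →ₗ[A] W), g ∘ₗ δ (j + 1) = 0 →
    ∃ b : F j →ₗ[A] W, g = b ∘ₗ δ j

namespace SemidualizingAux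

variable {F δ}

lemma homExact_of_subsingleton (W : Type) [AddCommGroup W] [Module A W] [Subsingleton W] :
    HomExact F δ W := by
  intro j g _
  exact ⟨0, by ext x; exact Subsingleton.elim _ _⟩

lemma homExact_pi {W : Type} [AddCommGroup W] [Module A W] (hW : HomExact F δ W) (m : ℕ) :
    HomExact F δ (Fin m → W) := by
  intro j g hg
  have h : ∀ i : Fin m, ∃ b : F j →ₗ[A] W, (LinearMap.proj i) ∘ₗ g = b ∘ₗ δ j := by
    intro i
    refine hW j ((LinearMap.proj i) ∘ₗ g) ?_
    rw [LinearMap.comp_assoc, hg, LinearMap.comp_zero]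
  choose b hb using h
  refine ⟨LinearMap.pi b, ?_⟩
  ext x i
  exact DFunLike.congr_fun (hb i) x

variable (hproj : ∀ i, Module.Projective A (F i))
variable (hδδ : ∀ i : ℕ, δ i ∘ₗ δ (i + 1) = 0)

section SES

variable {K M Z : Type} [AddCommGroup K] [Module A K] [AddCommGroup M] [Module A M]
  [AddCommGroup Z] [Module A Z]
variable (ι : K →ₗ[A] M) (p : M →ₗ[A] Z)
variable (hp : Function.Surjective p) (hι : Function.Injective ι)
variable (hex : Function.Exact ι p)

include hproj hδδ hp hι hex

/-- The core diagram chase: any cocycle `g : F j → Z` lifts to a cocycle `h : F j → M`. -/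
lemma lift_exists (HK : HomExact F δ K) (j : ℕ) (g : F j →ₗ[A] Z) (hg : g ∘ₗ δ j = 0) :
    ∃ h : F j →ₗ[A] M, p ∘ₗ h = g ∧ h ∘ₗ δ j = 0 := by
  haveI := hproj j
  obtain ⟨h, hh⟩ := Module.projective_lifting_property p g hp
  have hmem : ∀ x : F (j + 1), (h ∘ₗ δ j) x ∈ LinearMap.range ι := by
    intro x
    rw [← hex.linearMap_ker_eq, LinearMap.mem_ker]
    have : p ((h ∘ₗ δ j) x) = (g ∘ₗ δ j) x := by
      simp [← hh]
    rw [this, hg]; rfl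
  let e' := LinearEquiv.ofInjective ι hι
  let α : F (j + 1) →ₗ[A] K :=
    e'.symm.toLinearMap ∘ₗ LinearMap.codRestrict (LinearMap.range ι) (h ∘ₗ δ j) hmem
  have hια : ι ∘ₗ α = h ∘ₗ δ j := by
    ext x
    have : ∀ y : LinearMap.range ι, ι (e'.symm y) = (y : M) := by
      intro y
      conv_rhs => rw [← e'.apply_symm_apply y]
      rfl
    exact this _
  have hα : α ∘ₗ δ (j + 1) = 0 := by
    ext x
    apply hι
    have h1 : ι (α (δ (j + 1) x)) = h (δ j (δ (j + 1) x)) := DFunLike.congr_fun hια (δ (j + 1) x)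
    have h2 : δ j (δ (j + 1) x) = 0 := DFunLike.congr_fun (hδδ j) x
    simp only [LinearMap.comp_apply, LinearMap.zero_apply, h1, h2, map_zero]
  obtain ⟨β, hβ⟩ := HK j α hα
  refine ⟨h - ι ∘ₗ β, ?_, ?_⟩
  · have hpι : p ∘ₗ ι = 0 := hex.linearMap_comp_eq_zero
    ext x
    simp [← hh, LinearMap.sub_comp]
    have : p (ι (β x)) = 0 := hex.apply_apply_eq_zero _
    simp [this]
  · rw [LinearMap.sub_comp, LinearMap.comp_assoc, ← hβ, hια, sub_self]

lemma homExact_of_ses (HK : HomExact F δ K) (HM : HomExact F δ M) : HomExact F δ Z := by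
  intro j g hg
  obtain ⟨h, hph, hhd⟩ := lift_exists hproj hδδ ι p hp hι hex HK (j + 1) g hg
  obtain ⟨γ, hγ⟩ := HM j h hhd
  exact ⟨p ∘ₗ γ, by rw [← hph, hγ, LinearMap.comp_assoc]⟩

variable {C' : Type} [AddCommGroup C'] [Module A C']
variable (e : F 0 →ₗ[A] C') (he : Function.Surjective e) (h0 : Function.Exact (δ 0) e)

include he h0

lemma hom_surjective_of_ses (HK : HomExact F δ K) (φ : C' →ₗ[A] Z) :
    ∃ ψ : C' →ₗ[A] M, p ∘ₗ ψ = φ := by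
  have hed : e ∘ₗ δ 0 = 0 := h0.linearMap_comp_eq_zero
  obtain ⟨h, hph, hhd⟩ := lift_exists hproj hδδ ι p hp hι hex HK 0 (φ ∘ₗ e)
    (by rw [LinearMap.comp_assoc, hed, LinearMap.comp_zero])
  have hker : LinearMap.ker e ≤ LinearMap.ker h := by
    intro x hx
    rw [LinearMap.mem_ker] at hx ⊢
    rw [h0 x] at hx
    obtain ⟨y, rfl⟩ := hx
    exact DFunLike.congr_fun hhd y
  let q := (LinearMap.ker e).liftQ h hker
  let eq := LinearMap.quotKerEquivOfSurjective e he
  refine ⟨q ∘ₗ eq.symm.toLinearMap, ?_⟩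
  have hfact : ∀ x : F 0, (q ∘ₗ eq.symm.toLinearMap) (e x) = h x := by
    intro x
    have h1 : eq.symm (e x) = Submodule.Quotient.mk x := by
      apply eq.injective
      rw [eq.apply_symm_apply]
      rfl
    simp only [LinearMap.comp_apply, LinearMap.coe_coe]
    erw [h1]
    exact Submodule.liftQ_apply _ h x
  ext c
  obtain ⟨x, rfl⟩ := he c
  have := hfact x
  simp only [LinearMap.comp_apply] at this ⊢
  rw [this]
  exact DFunLike.congr_fun hph x

end SES

section Free

variable {C : Type} [AddCommGroup C] [Module A C]

/-- Hom into a finite power, as a pi-type of Homs. -/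
noncomputable def homPiEquiv (k : ℕ) :
    (C →ₗ[A] (Fin k → C)) ≃ₗ[A] (Fin k → (C →ₗ[A] C)) where
  toFun φ := fun i => LinearMap.proj i ∘ₗ φ
  map_add' φ ψ := by ext i x; rfl
  map_smul' a φ := by ext i x; rfl
  invFun b := LinearMap.pi b
  left_inv φ := by ext x i; rfl
  right_inv b := by ext i x; rfl

/-- The natural map `A → End_A(C)`, as a linear equivalence when it is bijective. -/
noncomputable def endEquiv (hbij : Function.Bijective (algebraMap A (Module.End A C))) :
    A ≃ₗ[A] (C →ₗ[A] C) :=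
  LinearEquiv.ofBijective
    { toFun := algebraMap A (Module.End A C)
      map_add' := map_add _
      map_smul' := by
        intro a b
        simp [Algebra.algebraMap_eq_smul_one, mul_smul] }
    hbij

lemma free_and_finite (hbij : Function.Bijective (algebraMap A (Module.End A C))) (k : ℕ) :
    Module.Free A (C →ₗ[A] (Fin k → C)) ∧ Module.Finite A (C →ₗ[A] (Fin k → C)) := by
  haveI h1 : Module.Free A (C →ₗ[A] C) := Module.Free.of_equiv (endEquiv hbij)
  haveI h2 : Module.Finite A (C →ₗ[A] C) := Module.Finite.equiv (endEquiv hbij)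
  haveI h3 : Module.Free A (Fin k → (C →ₗ[A] C)) := inferInstance
  haveI h4 : Module.Finite A (Fin k → (C →ₗ[A] C)) := inferInstance
  exact ⟨Module.Free.of_equiv (homPiEquiv k).symm, Module.Finite.equiv (homPiEquiv k).symm⟩

end Free

section Bridge

variable (A)
variable (C : Type) [AddCommGroup C] [Module A C]

/-- From the `Ext`-vanishing hypothesis, produce a concrete projective resolution `F•` of `C`
such that `Hom(F•, C)` is exact in positive degrees. -/
lemma bridge (hExt : ∀ i : ℕ, 0 < i →
    Subsingleton (((Ext A (ModuleCat A) i).obj (op (ModuleCat.of A C))).obj (ModuleCat.of A C))) :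
    ∃ (F : ℕ → ModuleCat A) (δ : ∀ i : ℕ, (F (i + 1) : Type) →ₗ[A] F i)
      (e : (F 0 : Type) →ₗ[A] C),
      (∀ i, Module.Projective A (F i)) ∧
      (∀ i, δ i ∘ₗ δ (i + 1) = 0) ∧
      Function.Surjective e ∧
      Function.Exact (δ 0) e ∧
      HomExact (fun i => (F i : Type)) δ C := by
  obtain ⟨P⟩ := (inferInstance : HasProjectiveResolution (ModuleCat.of A C)).out
  refine ⟨fun i => P.complex.X i, fun i => (P.complex.d (i + 1) i).hom,
    ((P.π.f 0 ≫ (HomologicalComplex.singleObjXSelf (ComplexShape.down ℕ) 0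
      (ModuleCat.of A C)).hom).hom : P.complex.X 0 →ₗ[A] ModuleCat.of A C),
    ?_, ?_, ?_, ?_, ?_⟩
  · intro i
    rw [IsProjective.iff_projective]
    exact P.projective i
  · intro i
    exact congrArg ModuleCat.Hom.hom (P.complex.d_comp_d (i + 2) (i + 1) i)
  · have h1 : Epi (P.π.f 0) := inferInstance
    have h2 := (ModuleCat.epi_iff_surjective _).mp h1
    have h3 := (ModuleCat.epi_iff_surjective
      ((HomologicalComplex.singleObjXSelf (ComplexShape.down ℕ) 0 (ModuleCat.of A C)).hom)).mp
      inferInstance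
    exact h3.comp h2
  · have hE := P.exact₀
    rw [ShortComplex.moduleCat_exact_iff] at hE
    intro x
    constructor
    · intro hx
      have hx' : P.π.f 0 x = 0 := by
        have hinj : Function.Injective
            ((HomologicalComplex.singleObjXSelf (ComplexShape.down ℕ) 0
              (ModuleCat.of A C)).hom) :=
          (ModuleCat.mono_iff_injective _).mp inferInstance
        apply hinj
        rw [map_zero]
        exact hx
      exact hE x hx'
    · rintro ⟨y, rfl⟩
      have hz : P.complex.d 1 0 ≫ P.π.f 0 = 0 := P.complex_d_comp_π_f_zero
      have hzy : P.π.f 0 (P.complex.d 1 0 y) = 0 := ConcreteCategory.congr_hom hz y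
      show (P.π.f 0 ≫ _) _ = 0
      simp only [LinearMap.coe_comp, Function.comp_apply] at hzy ⊢
      erw [hzy]
      rfl
  · set Q := P.complex.linearYonedaObj A (ModuleCat.of A C) with hQ
    intro j g hg
    have hsub : Subsingleton (Q.homology (j + 1)) := by
      haveI := hExt (j + 1) (Nat.succ_pos j)
      have e : ((Ext A (ModuleCat A) (j + 1)).obj (op (ModuleCat.of A C))).obj
          (ModuleCat.of A C) ≅ Q.homology (j + 1) := P.isoExt (j + 1) (ModuleCat.of A C)
      exact (e.toLinearEquiv.toEquiv.symm).subsingleton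
    have h1 : Q.ExactAt (j + 1) := by
      rw [HomologicalComplex.exactAt_iff_isZero_homology]
      exact ModuleCat.isZero_of_subsingleton _
    rw [Q.exactAt_iff' j (j + 1) (j + 2) (by simp) (by simp)] at h1
    rw [ShortComplex.moduleCat_exact_iff] at h1
    have h2 := h1 (ModuleCat.ofHom g) ?_
    · obtain ⟨b, hb⟩ := h2
      refine ⟨b.hom, ?_⟩
      exact congrArg ModuleCat.Hom.hom hb.symm
    · show Q.d (j + 1) (j + 2) (ModuleCat.ofHom g) = 0
      have h3 : Q.d (j + 1) (j + 2) (ModuleCat.ofHom g) =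
          ModuleCat.ofHom (g ∘ₗ (P.complex.d (j + 2) (j + 1)).hom) := rfl
      rw [h3, hg]; rfl

end Bridge

end SemidualizingAux

end SemidualizingAux

/-- Applying `Hom_A(C,−)` to a resolution `0 → C_s → ⋯ → C_0 → Y → 0` of `Y` by finite
direct sums of copies of a semidualizing module `C` yields a free resolution
`0 → Hom(C,C_s) → ⋯ → Hom(C,C_0) → Hom(C,Y) → 0` by finitely generated free modules. -/
theorem hom_of_cResolution_is_free_resolution
    (A : Type) [CommRing A] [IsNoetherianRing A] [IsLocalRing A]
    (C : Type) [AddCommGroup C] [Module A C] [Module.Finite A C]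
    (hC : IsSemidualizing A C)
    (Y : Type) [AddCommGroup Y] [Module A Y] [Module.Finite A Y]
    (s : ℕ) (n : ℕ → ℕ)
    (d : ∀ i : ℕ, ((Fin (n (i + 1)) → C) →ₗ[A] (Fin (n i) → C)))
    (ε : (Fin (n 0) → C) →ₗ[A] Y)
    (hfin : ∀ i, s < i → n i = 0)
    (hε : Function.Surjective ε) (h0 : Function.Exact (d 0) ε)
    (hd : ∀ i : ℕ, Function.Exact (d (i + 1)) (d i)) :
    (∀ i : ℕ, Module.Free A (C →ₗ[A] (Fin (n i) → C)) ∧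
      Module.Finite A (C →ₗ[A] (Fin (n i) → C))) ∧
    Function.Surjective (fun φ : C →ₗ[A] (Fin (n 0) → C) => ε ∘ₗ φ) ∧
    Function.Exact (fun φ : C →ₗ[A] (Fin (n 1) → C) => d 0 ∘ₗ φ)
      (fun φ : C →ₗ[A] (Fin (n 0) → C) => ε ∘ₗ φ) ∧
    ∀ i : ℕ, Function.Exact (fun φ : C →ₗ[A] (Fin (n (i + 2)) → C) => d (i + 1) ∘ₗ φ)
      (fun φ : C →ₗ[A] (Fin (n (i + 1)) → C) => d i ∘ₗ φ) := by
    classical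
  obtain ⟨hbij, hExt⟩ := hC
  obtain ⟨F, δ, e, hproj, hδδ, he, h0F, hHC⟩ := SemidualizingAux.bridge A C hExt
  -- `Hom(F•, C^m)` is exact in positive degrees
  have HM : ∀ m : ℕ, SemidualizingAux.HomExact (fun i => (F i : Type)) δ (Fin m → C) :=
    fun m => SemidualizingAux.homExact_pi hHC m
  -- syzygies
  set T : ∀ i : ℕ, Submodule A (Fin (n (i + 1)) → C) := fun i => LinearMap.ker (d i) with hT
  have hTrange : ∀ i : ℕ, T i = LinearMap.range (d (i + 1)) := by
    intro i
    exact LinearMap.exact_iff.mp (hd i)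
  -- the corestricted surjections
  have hmem : ∀ (i : ℕ) (x : Fin (n (i + 2)) → C), d (i + 1) x ∈ T i := by
    intro i x
    rw [hTrange i]
    exact LinearMap.mem_range_self _ x
  set p : ∀ i : ℕ, (Fin (n (i + 2)) → C) →ₗ[A] ↥(T i) :=
    fun i => (d (i + 1)).codRestrict (T i) (hmem i) with hp_def
  have hp : ∀ i, Function.Surjective (p i) := by
    intro i z
    have hz : (z : Fin (n (i + 1)) → C) ∈ LinearMap.range (d (i + 1)) := by
      rw [← hTrange i]; exact z.2
    obtain ⟨y, hy⟩ := hz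
    exact ⟨y, Subtype.ext hy⟩
  have hexp : ∀ i, Function.Exact (T (i + 1)).subtype (p i) := by
    intro i x
    constructor
    · intro hx
      have : d (i + 1) x = 0 := congrArg Subtype.val hx
      exact ⟨⟨x, this⟩, rfl⟩
    · rintro ⟨y, rfl⟩
      exact Subtype.ext y.2
  -- downward induction: all syzygies have exact `Hom(F•, -)` in positive degrees
  have key : ∀ k i : ℕ, s + 1 ≤ i + k →
      SemidualizingAux.HomExact (fun j => (F j : Type)) δ ↥(T i) := by
    intro k
    induction k with
    | zero =>
      intro i hi
      have hn1 : n (i + 1) = 0 := hfin _ (by omega)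
      haveI : IsEmpty (Fin (n (i + 1))) := by rw [hn1]; infer_instance
      haveI : Subsingleton (Fin (n (i + 1)) → C) :=
        ⟨fun f g => funext fun x => (IsEmpty.false x).elim⟩
      haveI : Subsingleton ↥(T i) := ⟨fun a b => Subtype.ext (Subsingleton.elim _ _)⟩
      exact SemidualizingAux.homExact_of_subsingleton _
    | succ k ih =>
      intro i hi
      exact SemidualizingAux.homExact_of_ses hproj hδδ (T (i + 1)).subtype (p i) (hp i)
        (Submodule.injective_subtype _) (hexp i) (ih (i + 1) (by omega)) (HM (n (i + 2)))
  have hTall : ∀ i, SemidualizingAux.HomExact (fun j => (F j : Type)) δ ↥(T i) :=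
    fun i => key (s + 1) i (by omega)
  -- the zeroth syzygy `ker ε`
  have hkerε : LinearMap.ker ε = LinearMap.range (d 0) := LinearMap.exact_iff.mp h0
  have hmemq : ∀ x : Fin (n 1) → C, d 0 x ∈ LinearMap.ker ε := by
    intro x; rw [hkerε]; exact LinearMap.mem_range_self _ x
  set q : (Fin (n 1) → C) →ₗ[A] ↥(LinearMap.ker ε) :=
    (d 0).codRestrict (LinearMap.ker ε) hmemq with hq_def
  have hq : Function.Surjective q := by
    intro z
    have hz : (z : Fin (n 0) → C) ∈ LinearMap.range (d 0) := by rw [← hkerε]; exact z.2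
    obtain ⟨y, hy⟩ := hz
    exact ⟨y, Subtype.ext hy⟩
  have hexq : Function.Exact (T 0).subtype q := by
    intro x
    constructor
    · intro hx
      have : d 0 x = 0 := congrArg Subtype.val hx
      exact ⟨⟨x, this⟩, rfl⟩
    · rintro ⟨y, rfl⟩
      exact Subtype.ext y.2
  have hKer : SemidualizingAux.HomExact (fun j => (F j : Type)) δ ↥(LinearMap.ker ε) :=
    SemidualizingAux.homExact_of_ses hproj hδδ (T 0).subtype q hq
      (Submodule.injective_subtype _) hexq (hTall 0) (HM (n 1))
  have hexε : Function.Exact (LinearMap.ker ε).subtype ε := by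
    intro x
    constructor
    · intro hx
      exact ⟨⟨x, hx⟩, rfl⟩
    · rintro ⟨y, rfl⟩
      exact y.2
  refine ⟨fun i => SemidualizingAux.free_and_finite hbij (n i), ?_, ?_, ?_⟩
  · -- surjectivity of `Hom(C, C^{n 0}) → Hom(C, Y)`
    intro φ
    obtain ⟨ψ, hψ⟩ := SemidualizingAux.hom_surjective_of_ses hproj hδδ
      (LinearMap.ker ε).subtype ε hε (Submodule.injective_subtype _) hexε e he h0F hKer φ
    exact ⟨ψ, hψ⟩
  · -- exactness at `Hom(C, C^{n 0})`
    intro φ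
    constructor
    · intro hφ
      have hφ' : ∀ c : C, φ c ∈ LinearMap.ker ε := by
        intro c
        exact DFunLike.congr_fun hφ c
      set φ' : C →ₗ[A] ↥(LinearMap.ker ε) := φ.codRestrict (LinearMap.ker ε) hφ' with hφ'_def
      obtain ⟨ψ, hψ⟩ := SemidualizingAux.hom_surjective_of_ses hproj hδδ
        (T 0).subtype q hq (Submodule.injective_subtype _) hexq e he h0F (hTall 0) φ'
      refine ⟨ψ, ?_⟩
      apply LinearMap.ext
      intro c
      exact congrArg Subtype.val (DFunLike.congr_fun hψ c)
    · rintro ⟨ψ, rfl⟩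
      show ε ∘ₗ (d 0 ∘ₗ ψ) = 0
      rw [← LinearMap.comp_assoc, h0.linearMap_comp_eq_zero, LinearMap.zero_comp]
  · -- exactness at `Hom(C, C^{n (i+1)})`
    intro i φ
    constructor
    · intro hφ
      have hφ' : ∀ c : C, φ c ∈ T i := by
        intro c
        exact DFunLike.congr_fun hφ c
      set φ' : C →ₗ[A] ↥(T i) := φ.codRestrict (T i) hφ' with hφ'_def
      obtain ⟨ψ, hψ⟩ := SemidualizingAux.hom_surjective_of_ses hproj hδδ
        (T (i + 1)).subtype (p i) (hp i) (Submodule.injective_subtype _) (hexp i) e he h0F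
        (hTall (i + 1)) φ'
      refine ⟨ψ, ?_⟩
      apply LinearMap.ext
      intro c
      exact congrArg Subtype.val (DFunLike.congr_fun hψ c)
    · rintro ⟨ψ, rfl⟩
      show d i ∘ₗ (d (i + 1) ∘ₗ ψ) = 0
      rw [← LinearMap.comp_assoc, (hd i).linearMap_comp_eq_zero, LinearMap.zero_comp]
end
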